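/- arXiv:1312.7162 — 6 statements merged into one kernel-verified Lean document; each statement's English description precedes it below -/
import Mathlib

section
/- There exists a continuous map f from the closed unit interval [0,1] into the Euclidean plane ℝ² whose image is exactly the unit square [0,1] × [0,1]; that is, a space-filling (Hilbert-type) curve exists. -/
/-!
The Cantor set `C ⊆ [0,1]` is homeomorphic to `ℕ → Bool`, so by the Hausdorff–Alexandroff
theorem it maps continuously onto any nonempty compact metric space, in particular onto the
square `[0,1]²`. Since `C` is closed in `ℝ` and the square is an absolute extensor
(a product of intervals), Tietze's theorem extends this map continuously to all of `ℝ`; its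
restriction to `[0,1] ⊇ C` is then onto the square.
-/

/-- The unit square `[0,1] × [0,1]` in the plane `ℝ²`. -/
def unitSquare : Set (ℝ × ℝ) := Set.Icc (0 : ℝ) 1 ×ˢ Set.Icc (0 : ℝ) 1

open Set

theorem exists_continuous_surjective_cantorSet (X : Type*) [Nonempty X] [MetricSpace X]
    [CompactSpace X] : ∃ f : cantorSet → X, Continuous f ∧ Function.Surjective f := by
  obtain ⟨f, hf, hsurj⟩ := exists_nat_bool_continuous_surjective_of_compact X
  exact ⟨f ∘ cantorSetHomeomorphNatToBool, hf.comp cantorSetHomeomorphNatToBool.continuous,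
    hsurj.comp cantorSetHomeomorphNatToBool.surjective⟩

theorem exists_continuousMap_image_Icc_eq_univ (X : Type*) [Nonempty X] [MetricSpace X]
    [CompactSpace X] [TietzeExtension.{0} X] : ∃ g : C(ℝ, X), g '' Icc 0 1 = univ := by
  obtain ⟨f, hf, hsurj⟩ := exists_continuous_surjective_cantorSet X
  obtain ⟨g, hg⟩ := ContinuousMap.exists_restrict_eq isClosed_cantorSet ⟨f, hf⟩
  refine ⟨g, eq_univ_of_forall fun x => ?_⟩
  obtain ⟨c, rfl⟩ := hsurj x
  exact ⟨c, cantorSet_subset_unitInterval c.2, congr($hg c)⟩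

/-- There exists a continuous map from the closed unit interval into the plane whose
image is exactly the unit square: a space-filling (Hilbert-type) curve exists. -/
theorem exists_space_filling_curve :
    ∃ f : ℝ → ℝ × ℝ, ContinuousOn f (Set.Icc 0 1) ∧
      f '' Set.Icc 0 1 = unitSquare := by
  obtain ⟨g, hg⟩ := exists_continuousMap_image_Icc_eq_univ (unitInterval × unitInterval)
  refine ⟨Prod.map Subtype.val Subtype.val ∘ g, (by fun_prop : Continuous _).continuousOn, ?_⟩
  rw [image_comp, hg, image_univ, range_prodMap, Subtype.range_coe]
  rfl
end

section
/- (Netto) No continuous map f : [0,1] → ℝ² that maps [0,1] onto the unit square [0,1] × [0,1] is injective; equivalently, there is no continuous bijection from the unit interval onto the unit square. -/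
/-!
If `f` were a continuous bijection from `[0,1]` onto the square, it would be a homeomorphism,
since `[0,1]` is compact. Removing `1/2` disconnects the interval, but removing any point leaves
the square (like every convex set not contained in a line) path connected.
-/

open Set

section Collinear

variable {k V P : Type*} [DivisionRing k] [AddCommGroup V] [Module k V] [AddTorsor V P]

theorem exists_mem_not_collinear_insert_pair {s : Set P} (hs : ¬ Collinear k s) {q r : P}
    (hqr : q ≠ r) : ∃ x ∈ s, ¬ Collinear k ({q, r, x} : Set P) := by
  by_contra! h
  refine hs ((collinear_iff_exists_forall_eq_smul_vadd s).2 ⟨q, r -ᵥ q, fun x hx => ?_⟩)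
  have hx : x ∈ line[k, q, r] :=
    (h x hx).mem_affineSpan_of_mem_of_ne (by simp) (by simp) (by simp) hqr
  obtain ⟨t, rfl⟩ := mem_affineSpan_pair_iff_exists_lineMap_eq.1 hx
  exact ⟨t, AffineMap.lineMap_apply q r t⟩

end Collinear

section Segment

variable {E : Type*} [AddCommGroup E]

theorem notMem_segment_of_mem_segment {k : Type*} [Field k] [LinearOrder k]
    [IsStrictOrderedRing k] [Module k E] {p q r x : E} (hp : p ∈ segment k q r) (hpq : p ≠ q)
    (hqrx : ¬ Collinear k ({q, r, x} : Set E)) : p ∉ segment k q x := by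
  intro hp'
  have hpqr : Collinear k ({p, q, r} : Set E) :=
    collinear_insert_of_mem_affineSpan_pair (mem_segment_iff_wbtw.1 hp).mem_affineSpan
  have hpqx : Collinear k ({p, q, x} : Set E) :=
    collinear_insert_of_mem_affineSpan_pair (mem_segment_iff_wbtw.1 hp').mem_affineSpan
  have hall : Collinear k (insert x {p, q, r} : Set E) :=
    (hpqr.collinear_insert_iff_of_ne (by simp) (by simp) hpq).2
      (hpqx.subset (by intro y; simp; tauto))
  exact hqrx (hall.subset (by intro y; simp; tauto))

variable [Module ℝ E] [TopologicalSpace E] [IsTopologicalAddGroup E] [ContinuousSMul ℝ E]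

theorem Convex.isPathConnected_sdiff_singleton {s : Set E} (hs : Convex ℝ s)
    (hcol : ¬ Collinear ℝ s) (p : E) : IsPathConnected (s \ {p}) := by
  have joinedIn_of_notMem {q r : E} (hq : q ∈ s) (hr : r ∈ s) (hp : p ∉ segment ℝ q r) :
      JoinedIn (s \ {p}) q r :=
    JoinedIn.of_segment_subset fun y hy =>
      ⟨hs.segment_subset hq hr hy, fun hyp => hp (mem_singleton_iff.1 hyp ▸ hy)⟩
  rw [isPathConnected_iff]
  constructor
  · obtain ⟨x, hx, y, hy, hxy⟩ : s.Nontrivial := by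
      by_contra h
      rcases (not_nontrivial_iff.1 h).eq_empty_or_singleton with rfl | ⟨x, rfl⟩
      exacts [hcol (collinear_empty ℝ E), hcol (collinear_singleton ℝ x)]
    by_cases hxp : x = p
    · exact ⟨y, hy, fun hyp => hxy (hxp.trans (mem_singleton_iff.1 hyp).symm)⟩
    · exact ⟨x, hx, hxp⟩
  rintro q ⟨hq, hqp⟩ r ⟨hr, hrp⟩
  by_cases hp : p ∈ segment ℝ q r
  swap
  · exact joinedIn_of_notMem hq hr hp
  have hpq : p ≠ q := fun h => hqp (h ▸ rfl)
  have hpr : p ≠ r := fun h => hrp (h ▸ rfl)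
  have hqr : q ≠ r := by rintro rfl; simp_all
  obtain ⟨x, hx, hqrx⟩ := exists_mem_not_collinear_insert_pair hcol hqr
  have hrqx : ¬ Collinear ℝ ({r, q, x} : Set E) := by rwa [insert_comm]
  refine (joinedIn_of_notMem hq hx (notMem_segment_of_mem_segment hp hpq hqrx)).trans
    (joinedIn_of_notMem hx hr ?_)
  rw [segment_symm]
  exact notMem_segment_of_mem_segment (segment_symm ℝ q r ▸ hp) hpr hrqx

end Segment

theorem convex_unitSquare : Convex ℝ unitSquare :=
  (convex_Icc 0 1).prod (convex_Icc 0 1)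

theorem not_collinear_unitSquare : ¬ Collinear ℝ unitSquare := by
  intro h
  obtain ⟨v, hv⟩ := (collinear_iff_of_mem (p₀ := ((0 : ℝ), (0 : ℝ))) (by simp [unitSquare])).1 h
  obtain ⟨a, ha⟩ := hv (1, 0) (by simp [unitSquare])
  obtain ⟨b, hb⟩ := hv (0, 1) (by simp [unitSquare])
  simp only [vadd_eq_add, Prod.ext_iff, Prod.fst_add, Prod.snd_add, Prod.smul_fst,
    Prod.smul_snd, smul_eq_mul, add_zero] at ha hb
  have : (1 : ℝ) = 0 := by linear_combination (b * v.2) * ha.1 - (b * v.1) * ha.2 + hb.2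
  exact one_ne_zero this

theorem not_isPreconnected_sdiff_singleton {α : Type*} [LinearOrder α] [TopologicalSpace α]
    [OrderClosedTopology α] {s : Set α} {a b c : α} (ha : a ∈ s) (hb : b ∈ s) (hac : a < c)
    (hcb : c < b) : ¬ IsPreconnected (s \ {c}) := fun h =>
  (h.ordConnected.out (by simp [ha, hac.ne]) (by simp [hb, hcb.ne']) ⟨hac.le, hcb.le⟩).2 rfl

theorem IsCompact.isPreconnected_of_isPreconnected_image {X Y : Type*} [TopologicalSpace X]
    [TopologicalSpace Y] [T2Space Y] {f : X → Y} {s t : Set X} (hs : IsCompact s)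
    (hf : ContinuousOn f s) (hinj : InjOn f s) (hts : t ⊆ s) (ht : IsPreconnected (f '' t)) :
    IsPreconnected t := by
  have : CompactSpace s := isCompact_iff_compactSpace.1 hs
  have hemb := hf.domRestrict.isClosedEmbedding hinj.injective
  have hval : ((↑) : s → X) '' ((↑) ⁻¹' t) = t := by
    rw [Subtype.image_preimage_coe, inter_eq_right.2 hts]
  have himage : s.domRestrict f '' ((↑) ⁻¹' t) = f '' t := by
    rw [domRestrict_eq, image_comp, hval]
  rw [← hval]
  exact (hemb.isInducing.isPreconnected_image.1 (himage ▸ ht)).image _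
    continuous_subtype_val.continuousOn

/-- (Netto) No continuous map from `[0,1]` onto the unit square is injective:
there is no continuous bijection from the unit interval onto the unit square. -/
theorem netto_no_injective_space_filling_curve :
    ∀ f : ℝ → ℝ × ℝ, ContinuousOn f (Set.Icc 0 1) →
      f '' Set.Icc 0 1 = unitSquare → ¬ Set.InjOn f (Set.Icc 0 1) := by
  intro f hf himg hinj
  have hhalf : (1 / 2 : ℝ) ∈ Icc (0 : ℝ) 1 := by norm_num
  have himage : f '' (Icc 0 1 \ {1 / 2}) = unitSquare \ {f (1 / 2)} := by
    rw [hinj.image_sdiff, himg, inter_singleton_of_mem hhalf, image_singleton]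
  have hsquare : IsPreconnected (f '' (Icc 0 1 \ {1 / 2})) := by
    rw [himage]
    exact (convex_unitSquare.isPathConnected_sdiff_singleton not_collinear_unitSquare
      _).isConnected.isPreconnected
  exact not_isPreconnected_sdiff_singleton (left_mem_Icc.2 zero_le_one)
    (right_mem_Icc.2 zero_le_one) (by norm_num : (0 : ℝ) < 1 / 2) (by norm_num)
    (isCompact_Icc.isPreconnected_of_isPreconnected_image hf hinj sdiff_subset hsquare)
end

section
/- Let q₁, q₂, q₃, q₄ : ℝ² → ℝ² be the four affine transformations of the Hilbert construction: q₁(x,y) = (y/2, x/2), q₂(x,y) = (x/2, (y+1)/2), q₃(x,y) = ((x+1)/2, (y+1)/2), q₄(x,y) = ((2−y)/2, (1−x)/2). Then the unit square Q = [0,1] × [0,1] is the unique nonempty compact subset K of ℝ² satisfying K = q₁(K) ∪ q₂(K) ∪ q₃(K) ∪ q₄(K). -/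
/-- First affine map of the Hilbert construction: `q₁(x,y) = (y/2, x/2)`. -/
noncomputable def q1 : ℝ × ℝ → ℝ × ℝ := fun p => (p.2 / 2, p.1 / 2)

/-- Second affine map of the Hilbert construction: `q₂(x,y) = (x/2, (y+1)/2)`. -/
noncomputable def q2 : ℝ × ℝ → ℝ × ℝ := fun p => (p.1 / 2, (p.2 + 1) / 2)

/-- Third affine map of the Hilbert construction: `q₃(x,y) = ((x+1)/2, (y+1)/2)`. -/
noncomputable def q3 : ℝ × ℝ → ℝ × ℝ := fun p => ((p.1 + 1) / 2, (p.2 + 1) / 2)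

/-- Fourth affine map of the Hilbert construction: `q₄(x,y) = ((2−y)/2, (1−x)/2)`. -/
noncomputable def q4 : ℝ × ℝ → ℝ × ℝ := fun p => ((2 - p.2) / 2, (1 - p.1) / 2)

open scoped NNReal ENNReal
open Metric Set

def hutchinson {ι α β : Type*} (f : ι → α → β) (s : Set α) : Set β := ⋃ i, f i '' s

theorem ENNReal.eq_zero_of_le_mul_of_lt_one {d K : ℝ≥0∞} (hd : d ≠ ∞) (hK : K < 1)
    (h : d ≤ K * d) : d = 0 := by
  by_contra hd₀
  have : d * K < d * 1 := ENNReal.mul_lt_mul_right hd₀ hd hK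
  rw [mul_one, mul_comm] at this
  exact this.not_ge h

section HausdorffEDist

variable {ι α β : Type*} [PseudoEMetricSpace α] [PseudoEMetricSpace β] {K : ℝ≥0}

-- `hK` cannot be dropped: for `K = 0` and `t = ∅` the right-hand side is `0 * ∞ = 0`.
theorem LipschitzWith.infEDist_image_le {f : α → β} (hf : LipschitzWith K f) (hK : K ≠ 0)
    (x : α) (t : Set α) : infEDist (f x) (f '' t) ≤ K * infEDist x t := by
  have hK' : (K : ℝ≥0∞) ≠ 0 := ENNReal.coe_ne_zero.2 hK
  rw [mul_comm, ← ENNReal.div_le_iff hK' ENNReal.coe_ne_top, le_infEDist]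
  intro y hy
  rw [ENNReal.div_le_iff hK' ENNReal.coe_ne_top, mul_comm]
  exact (infEDist_le_edist_of_mem (mem_image_of_mem f hy)).trans (hf x y)

theorem LipschitzWith.hausdorffEDist_image_le {f : α → β} (hf : LipschitzWith K f) (hK : K ≠ 0)
    (s t : Set α) : hausdorffEDist (f '' s) (f '' t) ≤ K * hausdorffEDist s t := by
  refine hausdorffEDist_le_of_infEDist ?_ ?_ <;> rintro _ ⟨x, hx, rfl⟩
  · exact (hf.infEDist_image_le hK x t).trans
      (by gcongr; exact infEDist_le_hausdorffEDist_of_mem hx)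
  · rw [hausdorffEDist_comm]
    exact (hf.infEDist_image_le hK x s).trans
      (by gcongr; exact infEDist_le_hausdorffEDist_of_mem hx)

theorem hausdorffEDist_hutchinson_le {f : ι → α → β} (hf : ∀ i, LipschitzWith K (f i))
    (hK : K ≠ 0) (s t : Set α) :
    hausdorffEDist (hutchinson f s) (hutchinson f t) ≤ K * hausdorffEDist s t :=
  hausdorffEDist_iUnion_le.trans (iSup_le fun i => (hf i).hausdorffEDist_image_le hK s t)

end HausdorffEDist

theorem eq_of_hutchinson_eq_self {ι α : Type*} [MetricSpace α] {f : ι → α → α} {K : ℝ≥0}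
    (hf : ∀ i, LipschitzWith K (f i)) (hK₀ : K ≠ 0) (hK : K < 1) {s t : Set α}
    (hs_ne : s.Nonempty) (ht_ne : t.Nonempty) (hs : IsCompact s) (ht : IsCompact t)
    (hfs : hutchinson f s = s) (hft : hutchinson f t = t) : s = t := by
  have hfin : hausdorffEDist s t ≠ ∞ :=
    hausdorffEDist_ne_top_of_nonempty_of_bounded hs_ne ht_ne hs.isBounded ht.isBounded
  have hcontr : hausdorffEDist s t ≤ K * hausdorffEDist s t := by
    simpa only [hfs, hft] using hausdorffEDist_hutchinson_le hf hK₀ s t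
  exact (hs.isClosed.hausdorffEDist_zero_iff ht.isClosed).1
    (ENNReal.eq_zero_of_le_mul_of_lt_one hfin (by exact_mod_cast hK) hcontr)

noncomputable def hilbertMaps : Fin 4 → ℝ × ℝ → ℝ × ℝ := ![q1, q2, q3, q4]

theorem hutchinson_hilbertMaps (s : Set (ℝ × ℝ)) :
    hutchinson hilbertMaps s = q1 '' s ∪ q2 '' s ∪ q3 '' s ∪ q4 '' s := by
  ext
  simp [hutchinson, hilbertMaps, Fin.exists_fin_succ, or_assoc]

theorem dist_hilbertMaps (i : Fin 4) (p p' : ℝ × ℝ) :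
    dist (hilbertMaps i p) (hilbertMaps i p') = dist p p' / 2 := by
  fin_cases i <;>
    simp [hilbertMaps, q1, q2, q3, q4, Prod.dist_eq, Real.dist_eq, ← sub_div, abs_div,
      max_div_div_right (zero_le_two : (0:ℝ) ≤ 2), max_comm, abs_sub_comm]

theorem lipschitzWith_hilbertMaps (i : Fin 4) : LipschitzWith 2⁻¹ (hilbertMaps i) :=
  LipschitzWith.of_dist_le_mul fun p p' => by
    rw [dist_hilbertMaps, NNReal.coe_inv, NNReal.coe_ofNat, inv_mul_eq_div]

theorem mapsTo_hilbertMaps_unitSquare (i : Fin 4) :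
    MapsTo (hilbertMaps i) unitSquare unitSquare := by
  rintro ⟨x, y⟩ ⟨⟨hx₀, hx₁⟩, hy₀, hy₁⟩
  dsimp only at hx₀ hx₁ hy₀ hy₁
  fin_cases i <;> simp [hilbertMaps, q1, q2, q3, q4, unitSquare] <;> and_intros <;> linarith

theorem unitSquare_subset_hutchinson_hilbertMaps :
    unitSquare ⊆ hutchinson hilbertMaps unitSquare := by
  rintro ⟨x, y⟩ ⟨⟨hx₀, hx₁⟩, hy₀, hy₁⟩
  simp only [hutchinson, mem_iUnion, mem_image]
  rcases le_total x 2⁻¹ with hx | hx <;> rcases le_total y 2⁻¹ with hy | hy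
  · exact ⟨0, (2 * y, 2 * x), by constructor <;> constructor <;> linarith,
      by simp [hilbertMaps, q1]⟩
  · exact ⟨1, (2 * x, 2 * y - 1), by constructor <;> constructor <;> linarith,
      by simp [hilbertMaps, q2]⟩
  · exact ⟨3, (1 - 2 * y, 2 - 2 * x), by constructor <;> constructor <;> linarith,
      by simp [hilbertMaps, q4]⟩
  · exact ⟨2, (2 * x - 1, 2 * y - 1), by constructor <;> constructor <;> linarith,
      by simp [hilbertMaps, q3]⟩

theorem hutchinson_hilbertMaps_unitSquare : hutchinson hilbertMaps unitSquare = unitSquare :=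
  (iUnion_subset fun i => (mapsTo_hilbertMaps_unitSquare i).image_subset).antisymm
    unitSquare_subset_hutchinson_hilbertMaps

/-- The unit square is the unique nonempty compact subset `K` of the plane with
`K = q₁(K) ∪ q₂(K) ∪ q₃(K) ∪ q₄(K)`. -/
theorem unitSquare_unique_attractor :
    (unitSquare.Nonempty ∧ IsCompact unitSquare ∧
      unitSquare = q1 '' unitSquare ∪ q2 '' unitSquare ∪ q3 '' unitSquare ∪ q4 '' unitSquare) ∧
    ∀ K : Set (ℝ × ℝ), K.Nonempty → IsCompact K →
      K = q1 '' K ∪ q2 '' K ∪ q3 '' K ∪ q4 '' K → K = unitSquare := by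
  have hQ : IsCompact unitSquare := isCompact_Icc.prod isCompact_Icc
  have hQ_ne : unitSquare.Nonempty := ⟨(0, 0), by simp [unitSquare]⟩
  refine ⟨⟨hQ_ne, hQ, by rw [← hutchinson_hilbertMaps, hutchinson_hilbertMaps_unitSquare]⟩,
    fun K hK_ne hK hK_fix => ?_⟩
  rw [← hutchinson_hilbertMaps] at hK_fix
  exact eq_of_hutchinson_eq_self lipschitzWith_hilbertMaps (by norm_num) (by norm_num) hK_ne hQ_ne
    hK hQ hK_fix.symm hutchinson_hilbertMaps_unitSquare
end

section
/- There is exactly one family (φₙ)_{n ≥ 1} of order-n grid enumerations such that for every n: (i) any two consecutive cells φₙ(j), φₙ(j+1) are edge-adjacent (adjacency condition); (ii) φₙ(0) = (0,0) and φₙ(4^n − 1) = (2^n − 1, 0) (endpoint condition); and (iii) for all j < 4^{n+1}, integer division of both coordinates of φ_{n+1}(j) by 2 yields φₙ(⌊j/4⌋) (nesting condition). This family is the sequence of order-n approximations of the Hilbert curve, which is uniquely determined by the nesting and adjacency conditions together with the prescribed first and last subsquares. -/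
/-- An order-`n` grid enumeration: a bijection between `Fin (4^n)` and the cells of the
`2^n × 2^n` grid; cell `(a,b)` represents the subsquare with lower-left corner
`(a/2^n, b/2^n)`. -/
abbrev GridEnum (n : ℕ) := Fin (4 ^ n) ≃ Fin (2 ^ n) × Fin (2 ^ n)

/-- Two grid cells are edge-adjacent if their coordinates (as integers) satisfy
`|a − a'| + |b − b'| = 1`. -/
def edgeAdj {m : ℕ} (c d : Fin m × Fin m) : Prop :=
  |((c.1 : ℕ) : ℤ) - ((d.1 : ℕ) : ℤ)| + |((c.2 : ℕ) : ℤ) - ((d.2 : ℕ) : ℤ)| = 1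

/-- Two grid cells are king-adjacent if their coordinates (as integers) satisfy
`max (|a − a'|) (|b − b'|) = 1`. -/
def kingAdj {m : ℕ} (c d : Fin m × Fin m) : Prop :=
  max |((c.1 : ℕ) : ℤ) - ((d.1 : ℕ) : ℤ)| |((c.2 : ℕ) : ℤ) - ((d.2 : ℕ) : ℤ)| = 1

/-- Adjacency condition: any two consecutive cells of the enumeration are edge-adjacent. -/
def ConsecEdgeAdj {n : ℕ} (φ : GridEnum n) : Prop :=
  ∀ (j : ℕ) (h : j + 1 < 4 ^ n), edgeAdj (φ ⟨j, Nat.lt_of_succ_lt h⟩) (φ ⟨j + 1, h⟩)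

/-- Any two consecutive cells of the enumeration are king-adjacent. -/
def ConsecKingAdj {n : ℕ} (φ : GridEnum n) : Prop :=
  ∀ (j : ℕ) (h : j + 1 < 4 ^ n), kingAdj (φ ⟨j, Nat.lt_of_succ_lt h⟩) (φ ⟨j + 1, h⟩)

/-- Endpoint condition: the enumeration starts at the lower-left cell `(0,0)` and ends
at the lower-right cell `(2^n − 1, 0)`. -/
def EndpointCond {n : ℕ} (φ : GridEnum n) : Prop :=
  φ ⟨0, by positivity⟩ = (⟨0, by positivity⟩, ⟨0, by positivity⟩) ∧
  φ ⟨4 ^ n - 1, Nat.sub_lt (by positivity) Nat.one_pos⟩ =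
    (⟨2 ^ n - 1, Nat.sub_lt (by positivity) Nat.one_pos⟩, ⟨0, by positivity⟩)

/-- Nesting condition: integer division of both coordinates of `φₙ₊₁ j` by 2 yields
`φₙ ⌊j/4⌋`. -/
def Nests {n : ℕ} (φn : GridEnum n) (φn1 : GridEnum (n + 1)) : Prop :=
  ∀ j : Fin (4 ^ (n + 1)),
    ((φn1 j).1 : ℕ) / 2 =
      ((φn ⟨(j : ℕ) / 4, by
        have hj : (j : ℕ) < 4 ^ n * 4 := by simpa [pow_succ] using j.isLt
        omega⟩).1 : ℕ) ∧
    ((φn1 j).2 : ℕ) / 2 =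
      ((φn ⟨(j : ℕ) / 4, by
        have hj : (j : ℕ) < 4 ^ n * 4 := by simpa [pow_succ] using j.isLt
        omega⟩).2 : ℕ)

/-!
The Hilbert curve of order `n + 1` runs through the four quadrants of the grid, each quadrant
traversed by a suitably transposed or reflected copy of the order-`n` curve; this gives existence.

For uniqueness, suppose `φ` and `φ'` both refine the same order-`n` enumeration `ψ`, so the four
cells `φ (4k), …, φ (4k+3)` fill the `2 × 2` square `ψ k`. Colour the grid like a chessboard:
consecutive cells have opposite colours and `φ 0 = (0,0)`, so `φ j` has colour `j mod 2`. A `2 × 2`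
square contains exactly two cells of each colour, so it suffices to determine `φ (4k)` and
`φ (4k+3)`. The exit cell `φ (4k+3)` is the unique odd cell of `ψ k` adjacent to the square
`ψ (k+1)` (or the prescribed last cell), and the entry cell `φ (4k+4)` is the unique cell of
`ψ (k+1)` adjacent to it. Every order-`1` enumeration refines the unique order-`0` one,
so the induction over `n` can start at `0`.
-/

open Set

def gridAdj (u v : ℕ × ℕ) : Prop := u.1.dist v.1 + u.2.dist v.2 = 1

/-- The cell of the grid of half the resolution containing `u`. -/
def parent (u : ℕ × ℕ) : ℕ × ℕ := (u.1 / 2, u.2 / 2)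

def color (u : ℕ × ℕ) : ℕ := (u.1 + u.2) % 2

def InBox (n : ℕ) (p : ℕ × ℕ) : Prop := p.1 < 2 ^ n ∧ p.2 < 2 ^ n

lemma gridAdj_iff {u v : ℕ × ℕ} :
    gridAdj u v ↔ u.1 = v.1 ∧ (u.2 + 1 = v.2 ∨ v.2 + 1 = u.2) ∨
      u.2 = v.2 ∧ (u.1 + 1 = v.1 ∨ v.1 + 1 = u.1) := by
  unfold gridAdj Nat.dist
  omega

lemma color_eq_mod_two {s : ℕ → ℕ × ℕ} {N : ℕ} (h0 : s 0 = (0, 0))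
    (hs : ∀ j, j + 1 < N → gridAdj (s j) (s (j + 1))) : ∀ j < N, color (s j) = j % 2 := by
  intro j hj
  induction j with
  | zero => simp [h0, color]
  | succ j ih =>
    have := gridAdj_iff.1 (hs j hj)
    have := ih (by omega)
    unfold color at *
    omega

lemma eq_of_color_eq_of_ne {a b c : ℕ × ℕ} (ha : parent a = parent c) (hb : parent b = parent c)
    (hca : color a = color c) (hcb : color b = color c) (hac : a ≠ c) (hbc : b ≠ c) : a = b := by
  simp only [parent, color, Prod.ext_iff, ne_eq] at *
  omega

lemma eq_of_gridAdj_of_parent_ne {x y y' : ℕ × ℕ} (hy : parent y = parent y')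
    (hx : parent x ≠ parent y) (h : gridAdj x y) (h' : gridAdj x y') : y = y' := by
  rw [gridAdj_iff] at h h'
  simp only [parent, Prod.ext_iff, ne_eq] at *
  omega

/-- Each side of a `2 × 2` square contains one cell of each colour. -/
lemma eq_of_color_eq_of_gridAdj_of_parent_ne {x x' y y' : ℕ × ℕ} (hx : parent x = parent x')
    (hc : color x = color x') (hy : parent y = parent y') (hxy : parent x ≠ parent y)
    (h : gridAdj x y) (h' : gridAdj x' y') : x = x' := by
  rw [gridAdj_iff] at h h'
  simp only [parent, color, Prod.ext_iff, ne_eq] at *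
  omega

lemma edgeAdj_iff_gridAdj {m : ℕ} (c d : Fin m × Fin m) :
    edgeAdj c d ↔ gridAdj (Prod.map Fin.val Fin.val c) (Prod.map Fin.val Fin.val d) := by
  unfold edgeAdj gridAdj Nat.dist
  simp only [Prod.map_fst, Prod.map_snd, Int.abs_eq_natAbs]
  omega

namespace GridEnum

variable {n : ℕ}

/-- The `j`-th cell of `φ` in natural-number coordinates (junk value `0` for `j ≥ 4 ^ n`). -/
def pt (φ : GridEnum n) (j : ℕ) : ℕ × ℕ :=
  if h : j < 4 ^ n then Prod.map Fin.val Fin.val (φ ⟨j, h⟩) else 0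

lemma pt_of_lt (φ : GridEnum n) {j : ℕ} (h : j < 4 ^ n) :
    φ.pt j = Prod.map Fin.val Fin.val (φ ⟨j, h⟩) :=
  dif_pos h

lemma ext_pt {φ φ' : GridEnum n} (h : ∀ j < 4 ^ n, φ.pt j = φ'.pt j) : φ = φ' := by
  ext j <;> have := h j j.isLt <;> simp_all [pt_of_lt, Prod.ext_iff]

lemma pt_injOn (φ : GridEnum n) : InjOn φ.pt (Iio (4 ^ n)) := by
  intro i hi j hj h
  rw [pt_of_lt φ hi, pt_of_lt φ hj] at h
  have := φ.injective (Prod.map_injective.2 ⟨Fin.val_injective, Fin.val_injective⟩ h)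
  simpa using congrArg Fin.val this

lemma consecEdgeAdj_iff (φ : GridEnum n) :
    ConsecEdgeAdj φ ↔ ∀ j, j + 1 < 4 ^ n → gridAdj (φ.pt j) (φ.pt (j + 1)) := by
  refine forall_congr' fun j => ⟨fun h hj => ?_, fun h hj => ?_⟩ <;>
  simpa [pt_of_lt φ hj, pt_of_lt φ (Nat.lt_of_succ_lt hj), edgeAdj_iff_gridAdj] using h hj

lemma endpointCond_iff (φ : GridEnum n) :
    EndpointCond φ ↔ φ.pt 0 = (0, 0) ∧ φ.pt (4 ^ n - 1) = (2 ^ n - 1, 0) := by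
  rw [EndpointCond, pt_of_lt φ (by positivity), pt_of_lt φ (by simp)]
  simp only [Prod.ext_iff, Fin.ext_iff, Prod.map_fst, Prod.map_snd]

lemma nests_iff (ψ : GridEnum n) (φ : GridEnum (n + 1)) :
    Nests ψ φ ↔ ∀ j < 4 ^ (n + 1), parent (φ.pt j) = ψ.pt (j / 4) := by
  have h4 : ∀ j < 4 ^ (n + 1), j / 4 < 4 ^ n := fun j hj => by rw [pow_succ] at hj; omega
  refine ⟨fun h j hj => ?_, fun h j => ?_⟩
  · rw [pt_of_lt φ hj, pt_of_lt ψ (h4 j hj)]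
    exact Prod.ext (h ⟨j, hj⟩).1 (h ⟨j, hj⟩).2
  · have := h j j.isLt
    rw [pt_of_lt φ j.isLt, pt_of_lt ψ (h4 j j.isLt)] at this
    exact Prod.ext_iff.1 this

noncomputable def ofInjOn (s : ℕ → ℕ × ℕ) (hs : ∀ j, InBox n (s j))
    (hinj : InjOn s (Iio (4 ^ n))) : GridEnum n :=
  Equiv.ofBijective (fun j => (⟨(s j).1, (hs j).1⟩, ⟨(s j).2, (hs j).2⟩)) <| by
    refine (Fintype.bijective_iff_injective_and_card _).2 ⟨fun i j h => ?_, ?_⟩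
    · simp only [Prod.mk.injEq, Fin.mk.injEq] at h
      exact Fin.ext (hinj i.isLt j.isLt (Prod.ext h.1 h.2))
    · simp [← mul_pow]

lemma pt_ofInjOn {s : ℕ → ℕ × ℕ} (hs : ∀ j, InBox n (s j)) (hinj : InjOn s (Iio (4 ^ n)))
    {j : ℕ} (hj : j < 4 ^ n) : (ofInjOn s hs hinj).pt j = s j :=
  pt_of_lt _ hj

end GridEnum

/-- Placement of a point of the order-`n` grid into quadrant `q` of the order-`n + 1` grid:
lower left (transposed), upper left, upper right, lower right (reflected in the anti-diagonal). -/
def hilbertQuad (n q : ℕ) (p : ℕ × ℕ) : ℕ × ℕ :=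
  match q with
  | 0 => (p.2, p.1)
  | 1 => (p.1, p.2 + 2 ^ n)
  | 2 => (p.1 + 2 ^ n, p.2 + 2 ^ n)
  | _ => (2 ^ (n + 1) - 1 - p.2, 2 ^ n - 1 - p.1)

def hilbert : ℕ → ℕ → ℕ × ℕ
  | 0, _ => (0, 0)
  | n + 1, t => hilbertQuad n (t / 4 ^ n) (hilbert n (t % 4 ^ n))

section hilbert

variable {n : ℕ}

lemma hilbert_succ_add {q r : ℕ} (hr : r < 4 ^ n) :
    hilbert (n + 1) (4 ^ n * q + r) = hilbertQuad n q (hilbert n r) := by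
  have h4 : 0 < 4 ^ n := by positivity
  rw [hilbert, Nat.mul_add_div h4, Nat.mul_add_mod, Nat.div_eq_of_lt hr, Nat.mod_eq_of_lt hr,
    add_zero]

lemma exists_eq_pow_mul_add {t : ℕ} (ht : t < 4 ^ (n + 1)) :
    ∃ q < 4, ∃ r < 4 ^ n, t = 4 ^ n * q + r := by
  have h4 : 0 < 4 ^ n := by positivity
  refine ⟨t / 4 ^ n, ?_, t % 4 ^ n, Nat.mod_lt t h4, (Nat.div_add_mod t _).symm⟩
  rw [pow_succ] at ht
  exact Nat.div_lt_of_lt_mul ht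

lemma hilbertQuad_inBox {q : ℕ} {p : ℕ × ℕ} (hp : InBox n p) :
    InBox (n + 1) (hilbertQuad n q p) := by
  unfold InBox at *
  rw [pow_succ]
  rcases q with _ | _ | _ | q <;> simp only [hilbertQuad] <;> omega

lemma hilbert_inBox (n t : ℕ) : InBox n (hilbert n t) := by
  induction n generalizing t with
  | zero => simp [hilbert, InBox]
  | succ n ih => exact hilbertQuad_inBox (ih _)

lemma hilbert_zero (n : ℕ) : hilbert n 0 = (0, 0) := by
  induction n with
  | zero => rfl
  | succ n ih => simp [hilbert, ih, hilbertQuad]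

lemma hilbert_last (n : ℕ) : hilbert n (4 ^ n - 1) = (2 ^ n - 1, 0) := by
  induction n with
  | zero => rfl
  | succ n ih =>
    have h4 : 0 < 4 ^ n := by positivity
    have : 4 ^ (n + 1) - 1 = 4 ^ n * 3 + (4 ^ n - 1) := by rw [pow_succ]; omega
    rw [this, hilbert_succ_add (by omega), ih]
    simp [hilbertQuad]

lemma hilbertQuad_injective {q q' : ℕ} {p p' : ℕ × ℕ} (hq : q < 4) (hq' : q' < 4)
    (hp : InBox n p) (hp' : InBox n p') (h : hilbertQuad n q p = hilbertQuad n q' p') :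
    q = q' ∧ p = p' := by
  unfold InBox at hp hp'
  rw [Prod.ext_iff] at h ⊢
  interval_cases q <;> interval_cases q' <;> simp only [hilbertQuad, pow_succ] at h <;> omega

lemma hilbert_injOn (n : ℕ) : InjOn (hilbert n) (Iio (4 ^ n)) := by
  induction n with
  | zero => intro t ht t' ht' _; simp_all
  | succ n ih =>
    intro t ht t' ht' h
    obtain ⟨q, hq, r, hr, rfl⟩ := exists_eq_pow_mul_add ht
    obtain ⟨q', hq', r', hr', rfl⟩ := exists_eq_pow_mul_add ht'
    rw [hilbert_succ_add hr, hilbert_succ_add hr'] at h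
    obtain ⟨rfl, hp⟩ := hilbertQuad_injective hq hq' (hilbert_inBox n r) (hilbert_inBox n r') h
    rw [ih hr hr' hp]

lemma gridAdj_hilbertQuad {q : ℕ} {p p' : ℕ × ℕ} (hp : InBox n p) (hp' : InBox n p')
    (h : gridAdj p p') : gridAdj (hilbertQuad n q p) (hilbertQuad n q p') := by
  unfold InBox at hp hp'
  rw [gridAdj_iff] at h ⊢
  rcases q with _ | _ | _ | q <;> simp only [hilbertQuad, pow_succ] <;> omega

lemma gridAdj_hilbertQuad_succ {q : ℕ} (hq : q < 3) :
    gridAdj (hilbertQuad n q (2 ^ n - 1, 0)) (hilbertQuad n (q + 1) (0, 0)) := by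
  have : 0 < 2 ^ n := by positivity
  rw [gridAdj_iff]
  interval_cases q <;> simp only [hilbertQuad, pow_succ, true_and] <;> omega

lemma gridAdj_hilbert (n : ℕ) :
    ∀ t, t + 1 < 4 ^ n → gridAdj (hilbert n t) (hilbert n (t + 1)) := by
  induction n with
  | zero => intro t ht; simp at ht
  | succ n ih =>
    intro t ht
    obtain ⟨q, hq, r, hr, rfl⟩ := exists_eq_pow_mul_add (n := n) (t := t) (by omega)
    rcases Nat.lt_or_ge (r + 1) (4 ^ n) with hr1 | hr1
    · rw [add_assoc, hilbert_succ_add hr, hilbert_succ_add hr1]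
      exact gridAdj_hilbertQuad (hilbert_inBox n r) (hilbert_inBox n _) (ih r hr1)
    · have hq3 : q < 3 := by rw [pow_succ] at ht; nlinarith
      have hr' : r = 4 ^ n - 1 := by omega
      have hsucc : 4 ^ n * q + r + 1 = 4 ^ n * (q + 1) + 0 := by rw [hr']; ring_nf; omega
      rw [hsucc, hilbert_succ_add hr, hilbert_succ_add (by positivity), hr', hilbert_last,
        hilbert_zero]
      exact gridAdj_hilbertQuad_succ hq3

lemma parent_hilbertQuad {q : ℕ} {p : ℕ × ℕ} (hp : InBox (n + 1) p) :
    parent (hilbertQuad (n + 1) q p) = hilbertQuad n q (parent p) := by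
  unfold InBox at hp
  rw [pow_succ] at hp
  simp only [parent, Prod.ext_iff]
  rcases q with _ | _ | _ | q <;> simp only [hilbertQuad, pow_succ, true_and] <;> omega

lemma parent_hilbert (n : ℕ) :
    ∀ t < 4 ^ (n + 1), parent (hilbert (n + 1) t) = hilbert n (t / 4) := by
  induction n with
  | zero =>
    intro t _
    have := hilbert_inBox 1 t
    simp only [InBox, parent, hilbert, pow_one, Prod.ext_iff] at this ⊢
    omega
  | succ n ih =>
    intro t ht
    obtain ⟨q, hq, r, hr, rfl⟩ := exists_eq_pow_mul_add ht
    have hdiv : (4 ^ (n + 1) * q + r) / 4 = 4 ^ n * q + r / 4 := by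
      rw [show 4 ^ (n + 1) * q + r = 4 * (4 ^ n * q) + r by ring]
      omega
    rw [hilbert_succ_add hr, parent_hilbertQuad (hilbert_inBox _ r), ih r hr, hdiv,
      hilbert_succ_add (by rw [pow_succ] at hr; omega)]

end hilbert

noncomputable def hilbertEnum (n : ℕ) : GridEnum n :=
  .ofInjOn (hilbert n) (hilbert_inBox n) (hilbert_injOn n)

lemma hilbertEnum_pt {n j : ℕ} (hj : j < 4 ^ n) : (hilbertEnum n).pt j = hilbert n j :=
  GridEnum.pt_ofInjOn _ _ hj

lemma consecEdgeAdj_hilbertEnum (n : ℕ) : ConsecEdgeAdj (hilbertEnum n) := by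
  rw [GridEnum.consecEdgeAdj_iff]
  intro j hj
  rw [hilbertEnum_pt hj, hilbertEnum_pt (by omega)]
  exact gridAdj_hilbert n j hj

lemma endpointCond_hilbertEnum (n : ℕ) : EndpointCond (hilbertEnum n) := by
  rw [GridEnum.endpointCond_iff, hilbertEnum_pt (by positivity), hilbertEnum_pt (by simp),
    hilbert_zero, hilbert_last]
  exact ⟨rfl, rfl⟩

lemma nests_hilbertEnum (n : ℕ) : Nests (hilbertEnum n) (hilbertEnum (n + 1)) := by
  rw [GridEnum.nests_iff]
  intro j hj
  rw [hilbertEnum_pt hj, hilbertEnum_pt (by rw [pow_succ] at hj; omega)]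
  exact parent_hilbert n j hj

namespace GridEnum

variable {n : ℕ}

lemma nests_of_order_zero (ψ : GridEnum 0) (φ : GridEnum 1) : Nests ψ φ := by
  intro j
  have hφ := (φ j).1.isLt
  have hφ' := (φ j).2.isLt
  simp only [pow_one, Fin.val_eq_zero] at *
  omega

structure IsRefinement (ψ : GridEnum n) (φ : GridEnum (n + 1)) : Prop where
  adj : ConsecEdgeAdj φ
  endpoint : EndpointCond φ
  nests : Nests ψ φ

namespace IsRefinement

variable {ψ : GridEnum n} {φ φ' : GridEnum (n + 1)}

lemma gridAdj_pt (h : IsRefinement ψ φ) {j : ℕ} (hj : j + 1 < 4 ^ (n + 1)) :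
    gridAdj (φ.pt j) (φ.pt (j + 1)) :=
  (consecEdgeAdj_iff φ).1 h.adj j hj

lemma pt_zero (h : IsRefinement ψ φ) : φ.pt 0 = (0, 0) :=
  ((endpointCond_iff φ).1 h.endpoint).1

lemma pt_last (h : IsRefinement ψ φ) : φ.pt (4 ^ (n + 1) - 1) = (2 ^ (n + 1) - 1, 0) :=
  ((endpointCond_iff φ).1 h.endpoint).2

lemma color_pt (h : IsRefinement ψ φ) {j : ℕ} (hj : j < 4 ^ (n + 1)) :
    color (φ.pt j) = j % 2 :=
  color_eq_mod_two h.pt_zero (fun _ => h.gridAdj_pt) j hj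

lemma parent_pt (h : IsRefinement ψ φ) {k r : ℕ} (hk : k < 4 ^ n) (hr : r < 4) :
    parent (φ.pt (4 * k + r)) = ψ.pt k := by
  have hkr : (4 * k + r) / 4 = k := by omega
  rw [(nests_iff ψ φ).1 h.nests _ (by rw [pow_succ]; omega), hkr]

lemma pt_exit_eq (h : IsRefinement ψ φ) (h' : IsRefinement ψ φ') {k : ℕ} (hk : k < 4 ^ n) :
    φ.pt (4 * k + 3) = φ'.pt (4 * k + 3) := by
  have h4 : (4 : ℕ) ^ (n + 1) = 4 * 4 ^ n := pow_succ' 4 n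
  rcases Nat.lt_or_ge (k + 1) (4 ^ n) with hk1 | hk1
  · have hx := h.parent_pt hk (r := 3) (by norm_num)
    have hx' := h'.parent_pt hk (r := 3) (by norm_num)
    have hy : parent (φ.pt (4 * k + 3 + 1)) = ψ.pt (k + 1) :=
      h.parent_pt hk1 (r := 0) (by norm_num)
    have hy' : parent (φ'.pt (4 * k + 3 + 1)) = ψ.pt (k + 1) :=
      h'.parent_pt hk1 (r := 0) (by norm_num)
    refine eq_of_color_eq_of_gridAdj_of_parent_ne (hx.trans hx'.symm) ?_ (hy.trans hy'.symm) ?_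
      (h.gridAdj_pt (by omega)) (h'.gridAdj_pt (by omega))
    · rw [h.color_pt (by omega), h'.color_pt (by omega)]
    · rw [hx, hy]
      exact ψ.pt_injOn.ne hk hk1 (by omega)
  · rw [show 4 * k + 3 = 4 ^ (n + 1) - 1 by omega, h.pt_last, h'.pt_last]

lemma pt_entry_eq (h : IsRefinement ψ φ) (h' : IsRefinement ψ φ') {k : ℕ} (hk : k < 4 ^ n) :
    φ.pt (4 * k) = φ'.pt (4 * k) := by
  rcases k with _ | k
  · exact h.pt_zero.trans h'.pt_zero.symm
  · have hk' : k < 4 ^ n := by omega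
    have hlt : 4 * k + 3 + 1 < 4 ^ (n + 1) := by rw [pow_succ]; omega
    have hx := h.parent_pt hk' (r := 3) (by norm_num)
    have hy : parent (φ.pt (4 * k + 3 + 1)) = ψ.pt (k + 1) :=
      h.parent_pt hk (r := 0) (by norm_num)
    have hy' : parent (φ'.pt (4 * k + 3 + 1)) = ψ.pt (k + 1) :=
      h'.parent_pt hk (r := 0) (by norm_num)
    have hadj' := h'.gridAdj_pt hlt
    rw [← h.pt_exit_eq h' hk'] at hadj'
    have hxy : parent (φ.pt (4 * k + 3)) ≠ parent (φ.pt (4 * k + 3 + 1)) := by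
      rw [hx, hy]
      exact ψ.pt_injOn.ne hk' hk (by omega)
    exact eq_of_gridAdj_of_parent_ne (hy.trans hy'.symm) hxy (h.gridAdj_pt hlt) hadj'

lemma pt_eq_of_pt_eq (h : IsRefinement ψ φ) (h' : IsRefinement ψ φ') {k r s : ℕ}
    (hk : k < 4 ^ n) (hr : r < 4) (hs : s < 4) (hrs : r % 2 = s % 2) (hne : r ≠ s)
    (heq : φ.pt (4 * k + s) = φ'.pt (4 * k + s)) : φ.pt (4 * k + r) = φ'.pt (4 * k + r) := by
  have hr' : 4 * k + r < 4 ^ (n + 1) := by rw [pow_succ]; omega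
  have hs' : 4 * k + s < 4 ^ (n + 1) := by rw [pow_succ]; omega
  have hne' : 4 * k + r ≠ 4 * k + s := by omega
  refine eq_of_color_eq_of_ne (c := φ.pt (4 * k + s)) ?_ ?_ ?_ ?_
    (φ.pt_injOn.ne hr' hs' hne') (heq ▸ φ'.pt_injOn.ne hr' hs' hne')
  · rw [h.parent_pt hk hr, h.parent_pt hk hs]
  · rw [h'.parent_pt hk hr, h.parent_pt hk hs]
  · rw [h.color_pt hr', h.color_pt hs']
    omega
  · rw [h'.color_pt hr', h.color_pt hs']
    omega

theorem eq (h : IsRefinement ψ φ) (h' : IsRefinement ψ φ') : φ = φ' := by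
  refine ext_pt fun j hj => ?_
  obtain ⟨k, r, hr, rfl⟩ : ∃ k r, r < 4 ∧ j = 4 * k + r := ⟨j / 4, j % 4, by omega, by omega⟩
  have hk : k < 4 ^ n := by rw [pow_succ] at hj; omega
  interval_cases r
  · exact h.pt_entry_eq h' hk
  · exact h.pt_eq_of_pt_eq h' hk (s := 3) (by norm_num) (by norm_num) rfl (by norm_num)
      (h.pt_exit_eq h' hk)
  · exact h.pt_eq_of_pt_eq h' hk (s := 0) (by norm_num) (by norm_num) rfl (by norm_num)
      (h.pt_entry_eq h' hk)
  · exact h.pt_exit_eq h' hk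

end IsRefinement

end GridEnum

/-- There is exactly one family of order-`n` grid enumerations (`n ≥ 1`) satisfying the
adjacency, endpoint and nesting conditions: the order-`n` approximations of the Hilbert
curve are uniquely determined by these conditions. -/
theorem hilbert_family_unique :
    ∃! φ : ∀ n : ℕ, GridEnum n,
      ∀ n : ℕ, 1 ≤ n →
        ConsecEdgeAdj (φ n) ∧ EndpointCond (φ n) ∧ Nests (φ n) (φ (n + 1)) := by
  refine ⟨hilbertEnum, fun n _ => ⟨consecEdgeAdj_hilbertEnum n, endpointCond_hilbertEnum n,
    nests_hilbertEnum n⟩, fun φ hφ => funext fun n => ?_⟩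
  induction n with
  | zero => exact Subsingleton.elim (α := Fin 1 ≃ Fin 1 × Fin 1) _ _
  | succ n ih =>
    have hN : Nests (φ n) (φ (n + 1)) := by
      rcases n with _ | n
      · exact GridEnum.nests_of_order_zero _ _
      · exact (hφ (n + 1) (by omega)).2.2
    obtain ⟨hA, hE, -⟩ := hφ (n + 1) (by omega)
    exact GridEnum.IsRefinement.eq ⟨hA, hE, hN⟩ ⟨consecEdgeAdj_hilbertEnum _,
      endpointCond_hilbertEnum _, ih ▸ nests_hilbertEnum n⟩
end

section
/- For every n ≥ 1 there exists an order-n grid enumeration φ such that any two consecutive cells φ(j), φ(j+1) are edge-adjacent and, in addition, the last cell φ(4^n − 1) is edge-adjacent to the first cell φ(0); that is, the 2^n × 2^n grid admits a closed edge-adjacent enumeration (the order-n approximation of the Moore curve is such a closed curve). -/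
/-!
For even `m = q + 1` the `m × m` grid has a Hamiltonian cycle of edge-adjacent cells. Start
at `(0, 1)` and sweep the rows `1, …, q` column by column, upwards in even columns and
downwards in odd ones; as `q` is odd the last column ends at `(q, 1)`. Then return along row
`0` from `(q, 0)` to `(0, 0)`, which is adjacent to the starting cell. Cell number
`q * x + r` (`r < q`) of the sweep lies in column `x`, and cell `(q + 1) * q + t` is `(q - t, 0)`.
-/

namespace SnakeCycle

def row (q x r : ℕ) : ℕ := if x % 2 = 0 then r + 1 else q - r

def cell (q j : ℕ) : ℕ × ℕ :=
  if j < (q + 1) * q then (j / q, row q (j / q) (j % q)) else (q - (j - (q + 1) * q), 0)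

def index (q : ℕ) (c : ℕ × ℕ) : ℕ :=
  if c.2 = 0 then (q + 1) * q + (q - c.1)
  else q * c.1 + if c.1 % 2 = 0 then c.2 - 1 else q - c.2

def Adj (c d : ℕ × ℕ) : Prop :=
  c.1 = d.1 ∧ (c.2 + 1 = d.2 ∨ d.2 + 1 = c.2) ∨ c.2 = d.2 ∧ (c.1 + 1 = d.1 ∨ d.1 + 1 = c.1)

variable {q x r j : ℕ}

lemma cell_column (hx : x ≤ q) (hr : r < q) : cell q (q * x + r) = (x, row q x r) := by
  have hlt : q * x + r < (q + 1) * q := by nlinarith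
  have hdiv : (q * x + r) / q = x := by
    rw [Nat.mul_add_div (by omega), Nat.div_eq_of_lt hr, add_zero]
  have hmod : (q * x + r) % q = r := by rw [Nat.mul_add_mod, Nat.mod_eq_of_lt hr]
  simp only [cell, if_pos hlt, hdiv, hmod]

lemma cell_bottom (q t : ℕ) : cell q ((q + 1) * q + t) = (q - t, 0) := by
  simp [cell]

lemma lt_sq_cases (hj : j < (q + 1) * (q + 1)) :
    (∃ x r, x ≤ q ∧ r < q ∧ j = q * x + r) ∨ ∃ t ≤ q, j = (q + 1) * q + t := by
  rcases lt_or_ge j ((q + 1) * q) with h | h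
  · have hq : 0 < q := by rcases q with _ | q <;> simp_all
    exact Or.inl ⟨j / q, j % q, Nat.lt_succ_iff.mp (Nat.div_lt_of_lt_mul (by linarith)),
      Nat.mod_lt _ hq, (Nat.div_add_mod j q).symm⟩
  · have hsq : (q + 1) * (q + 1) = (q + 1) * q + (q + 1) := by ring
    exact Or.inr ⟨j - (q + 1) * q, by omega, by omega⟩

lemma row_lt (hr : r < q) : row q x r < q + 1 := by
  unfold row; split_ifs <;> omega

lemma row_pos (hr : r < q) : 0 < row q x r := by
  unfold row; split_ifs <;> omega

lemma cell_lt (hj : j < (q + 1) * (q + 1)) : (cell q j).1 < q + 1 ∧ (cell q j).2 < q + 1 := by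
  rcases lt_sq_cases hj with ⟨x, r, hx, hr, rfl⟩ | ⟨t, ht, rfl⟩
  · rw [cell_column hx hr]; exact ⟨by omega, row_lt hr⟩
  · rw [cell_bottom q t]; exact ⟨by omega, by omega⟩

lemma index_cell (hj : j < (q + 1) * (q + 1)) : index q (cell q j) = j := by
  rcases lt_sq_cases hj with ⟨x, r, hx, hr, rfl⟩ | ⟨t, ht, rfl⟩
  · rw [cell_column hx hr, index, if_neg (row_pos hr).ne']
    dsimp only [row]
    split_ifs <;> omega
  · rw [cell_bottom q t]; simp only [index, if_pos]; omega

lemma adj_row_succ (hr : r + 1 < q) : Adj (x, row q x r) (x, row q x (r + 1)) := by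
  unfold Adj row; split_ifs <;> omega

lemma row_pred_eq_row_succ_zero (hq : 0 < q) : row q x (q - 1) = row q (x + 1) 0 := by
  unfold row; split_ifs <;> omega

lemma row_self_pred_of_odd (hq : Odd q) : row q q (q - 1) = 1 := by
  obtain ⟨k, rfl⟩ := hq
  unfold row; split_ifs <;> omega

lemma adj_cell_succ (hq : Odd q) (hj : j + 1 < (q + 1) * (q + 1)) :
    Adj (cell q j) (cell q (j + 1)) := by
  have hq0 : 0 < q := hq.pos
  have hsq : (q + 1) * (q + 1) = (q + 1) * q + (q + 1) := by ring
  rcases lt_sq_cases (Nat.lt_of_succ_lt hj) with ⟨x, r, hx, hr, rfl⟩ | ⟨t, ht, rfl⟩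
  · rw [cell_column hx hr]
    rcases lt_or_ge (r + 1) q with hr' | hr'
    · rw [add_assoc, cell_column hx hr']
      exact adj_row_succ hr'
    rcases lt_or_ge x q with hx' | hx'
    · have hnext : q * x + r + 1 = q * (x + 1) + 0 := by rw [mul_add]; omega
      rw [hnext, cell_column hx' hq0, ← row_pred_eq_row_succ_zero hq0, show r = q - 1 by omega]
      exact Or.inr ⟨rfl, Or.inl rfl⟩
    · have hx : x = q := by omega
      have hr : r = q - 1 := by omega
      subst x r
      have hnext : q * q + (q - 1) + 1 = (q + 1) * q + 0 := by rw [add_mul]; omega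
      rw [hnext, cell_bottom q 0, row_self_pred_of_odd hq]
      exact Or.inl ⟨by simp, Or.inr rfl⟩
  · rw [cell_bottom q t, add_assoc, cell_bottom q (t + 1)]
    exact Or.inr ⟨rfl, Or.inr (by omega)⟩

lemma adj_cell_last_first (hq : 0 < q) : Adj (cell q ((q + 1) * (q + 1) - 1)) (cell q 0) := by
  have hlast : (q + 1) * (q + 1) - 1 = (q + 1) * q + q := by rw [mul_add_one]; omega
  rw [hlast, cell_bottom, ← mul_zero q, ← add_zero (q * 0), cell_column (Nat.zero_le q) hq]
  simp [Adj, row]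

lemma edgeAdj_of_adj {m : ℕ} {c d : Fin m × Fin m}
    (h : Adj ((c.1 : ℕ), (c.2 : ℕ)) ((d.1 : ℕ), (d.2 : ℕ))) : edgeAdj c d := by
  unfold edgeAdj
  rcases h with ⟨h1, h2 | h2⟩ | ⟨h1, h2 | h2⟩ <;> grind

def toGrid (q : ℕ) (j : Fin ((q + 1) * (q + 1))) : Fin (q + 1) × Fin (q + 1) :=
  (⟨(cell q j).1, (cell_lt j.isLt).1⟩, ⟨(cell q j).2, (cell_lt j.isLt).2⟩)

lemma toGrid_bijective (q : ℕ) : Function.Bijective (toGrid q) := by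
  refine (Fintype.bijective_iff_injective_and_card _).mpr ⟨fun i j h => ?_, by simp⟩
  have hij : cell q i = cell q j := by
    simp only [toGrid, Prod.mk.injEq, Fin.mk.injEq] at h
    exact Prod.ext h.1 h.2
  exact Fin.ext (by rw [← index_cell i.isLt, ← index_cell j.isLt, hij])

end SnakeCycle

open SnakeCycle in
theorem exists_closed_edgeAdj_enum {m : ℕ} (hm : Even m) (hm0 : m ≠ 0) :
    ∃ e : Fin (m * m) ≃ Fin m × Fin m,
      (∀ (j : ℕ) (h : j + 1 < m * m), edgeAdj (e ⟨j, Nat.lt_of_succ_lt h⟩) (e ⟨j + 1, h⟩)) ∧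
      edgeAdj (e ⟨m * m - 1, Nat.sub_one_lt (by positivity)⟩) (e ⟨0, by positivity⟩) := by
  obtain ⟨q, rfl⟩ : ∃ q, m = q + 1 := Nat.exists_eq_succ_of_ne_zero hm0
  have hq : Odd q := Nat.not_even_iff_odd.mp (Nat.even_add_one.mp hm)
  exact ⟨Equiv.ofBijective _ (toGrid_bijective q),
    fun j h => edgeAdj_of_adj (adj_cell_succ hq h), edgeAdj_of_adj (adj_cell_last_first hq.pos)⟩

/-- For every `n ≥ 1` the `2^n × 2^n` grid admits a closed edge-adjacent enumeration:
consecutive cells are edge-adjacent and the last cell is edge-adjacent to the first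
(the order-`n` approximation of the Moore curve is such a closed curve). -/
theorem exists_closed_grid_enumeration (n : ℕ) (hn : 1 ≤ n) :
    ∃ φ : GridEnum n, ConsecEdgeAdj φ ∧
      edgeAdj (φ ⟨4 ^ n - 1, Nat.sub_lt (by positivity) Nat.one_pos⟩)
        (φ ⟨0, by positivity⟩) := by
  have hcard : 4 ^ n = 2 ^ n * 2 ^ n := by rw [← mul_pow]; norm_num
  obtain ⟨e, hstep, hclose⟩ :=
    exists_closed_edgeAdj_enum (m := 2 ^ n) ((Nat.even_pow' (by omega)).mpr even_two)
      (by positivity)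
  refine ⟨(finCongr hcard).trans e, fun j h => hstep j (hcard ▸ h), ?_⟩
  simpa [hcard] using hclose
end

section
/- Let (φₙ)_{n ≥ 1} be the unique family of order-n grid enumerations satisfying the adjacency condition (consecutive cells edge-adjacent), the endpoint condition (φₙ(0) = (0,0) and φₙ(4^n − 1) = (2^n − 1, 0)), and the nesting condition (for all j < 4^{n+1}, integer division of both coordinates of φ_{n+1}(j) by 2 yields φₙ(⌊j/4⌋)), i.e. the order-n Hilbert curves. Then for every n and all indices i < j < 4^n, the squared Euclidean distance between the cells satisfies (a − a')² + (b − b')² ≤ 6·(j − i), where φₙ(i) = (a,b) and φₙ(j) = (a',b') with coordinates viewed as integers; that is, the dilation factor of every finite-order Hilbert curve approximation is at most 6. -/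
/-!
The three conditions pin the enumerations down. Nesting confines the cells `4a, …, 4a+3` of
`φₙ₊₁` to the 2 × 2 block of `φₙ(a)`; a path of four distinct edge-adjacent cells in a 2 × 2
block is fixed by its first cell and one coordinate of its last cell; the first cell is forced
by the previous block, and the last cell must face the next block (or is the endpoint). By
induction on `n`, `φₙ` is the explicit recursive curve `hilbert n`.

For `hilbert` the bound is proved by induction on `n`, splitting indices by the quadrant of the
`2^(n+1)`-square they fall in. The induction is strengthened by the corner estimate
`|p|² + 2|p|_∞ ≤ 3j` for the `j`-th cell `p` measured from the start corner, and by symmetry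
`|p - e|² + 2|p - e|_∞ ≤ 3(4ⁿ - 1 - j)` from the end corner `e`. Cells in adjacent quadrants
are compared through the exit and entry corners between them; cells two quadrants apart
through the two corners of the middle quadrant when their index gap is at most `2·4ⁿ`;
otherwise the squared diameter `2(2^(n+1) - 1)²` of the square is already small enough.
-/

namespace HilbertCurve

def sqDist (p q : ℤ × ℤ) : ℤ := (p.1 - q.1) ^ 2 + (p.2 - q.2) ^ 2

def supDist (p q : ℤ × ℤ) : ℤ := max |p.1 - q.1| |p.2 - q.2|

def cornerCost (p c : ℤ × ℤ) : ℤ := sqDist p c + 2 * supDist p c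

def IsAdj (p q : ℤ × ℤ) : Prop := |p.1 - q.1| + |p.2 - q.2| = 1

def InSquare (N : ℤ) (p : ℤ × ℤ) : Prop := 0 ≤ p.1 ∧ p.1 < N ∧ 0 ≤ p.2 ∧ p.2 < N

def parent (p : ℤ × ℤ) : ℤ × ℤ := (p.1 / 2, p.2 / 2)

/-- Quadrants `0, 1, 2, 3` of the `2N × 2N` square are lower-left, upper-left, upper-right,
lower-right. -/
def quadrantMap (N : ℤ) : ℕ → ℤ × ℤ → ℤ × ℤ
  | 0, p => (p.2, p.1)
  | 1, p => (p.1, p.2 + N)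
  | 2, p => (p.1 + N, p.2 + N)
  | _, p => (2 * N - 1 - p.2, N - 1 - p.1)

def quadrantEntry (N : ℤ) (q : ℕ) : ℤ × ℤ := quadrantMap N q (0, 0)

def quadrantExit (N : ℤ) (q : ℕ) : ℤ × ℤ := quadrantMap N q (N - 1, 0)

def reflect (N : ℤ) (p : ℤ × ℤ) : ℤ × ℤ := (N - 1 - p.1, p.2)

def hilbert : ℕ → ℕ → ℤ × ℤ
  | 0, _ => (0, 0)
  | n + 1, j => quadrantMap (2 ^ n) (j / 4 ^ n) (hilbert n (j % 4 ^ n))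

theorem isAdj_iff {p q : ℤ × ℤ} : IsAdj p q ↔
    (p.1 = q.1 ∧ (p.2 = q.2 + 1 ∨ q.2 = p.2 + 1)) ∨
      (p.2 = q.2 ∧ (p.1 = q.1 + 1 ∨ q.1 = p.1 + 1)) := by
  simp only [IsAdj, abs_eq_max_neg]
  omega

theorem IsAdj.ne {p q : ℤ × ℤ} (h : IsAdj p q) : p ≠ q := by
  rintro rfl
  simp [IsAdj] at h

theorem sqDist_comm (p q : ℤ × ℤ) : sqDist p q = sqDist q p := by
  unfold sqDist
  ring

theorem sqDist_le_cornerCost (p c : ℤ × ℤ) : sqDist p c ≤ cornerCost p c :=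
  le_add_of_nonneg_right (mul_nonneg zero_le_two (le_max_of_le_left (abs_nonneg _)))

section quadrantMap

variable {N : ℤ} {q : ℕ}

theorem quadrantMap_abs_sub (q : ℕ) (p p' : ℤ × ℤ) :
    (|(quadrantMap N q p).1 - (quadrantMap N q p').1| = |p.1 - p'.1| ∧
        |(quadrantMap N q p).2 - (quadrantMap N q p').2| = |p.2 - p'.2|) ∨
      (|(quadrantMap N q p).1 - (quadrantMap N q p').1| = |p.2 - p'.2| ∧
        |(quadrantMap N q p).2 - (quadrantMap N q p').2| = |p.1 - p'.1|) := by
  match q with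
  | 0 => exact Or.inr ⟨rfl, rfl⟩
  | 1 => exact Or.inl ⟨rfl, by simp [quadrantMap]⟩
  | 2 => exact Or.inl ⟨by simp [quadrantMap], by simp [quadrantMap]⟩
  | _ + 3 =>
    refine Or.inr ⟨?_, ?_⟩ <;> · rw [abs_sub_comm]; simp only [quadrantMap]; ring_nf

theorem sqDist_quadrantMap (p p' : ℤ × ℤ) :
    sqDist (quadrantMap N q p) (quadrantMap N q p') = sqDist p p' := by
  unfold sqDist
  rw [← sq_abs ((quadrantMap N q p).1 - _), ← sq_abs ((quadrantMap N q p).2 - _),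
    ← sq_abs (p.1 - _), ← sq_abs (p.2 - _)]
  rcases quadrantMap_abs_sub q p p' with ⟨h1, h2⟩ | ⟨h1, h2⟩ <;> rw [h1, h2]
  ring

theorem cornerCost_quadrantMap (p p' : ℤ × ℤ) :
    cornerCost (quadrantMap N q p) (quadrantMap N q p') = cornerCost p p' := by
  have hsup : supDist (quadrantMap N q p) (quadrantMap N q p') = supDist p p' := by
    unfold supDist
    rcases quadrantMap_abs_sub q p p' with ⟨h1, h2⟩ | ⟨h1, h2⟩ <;> rw [h1, h2]
    exact max_comm _ _
  rw [cornerCost, cornerCost, sqDist_quadrantMap, hsup]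

theorem IsAdj.quadrantMap {p p' : ℤ × ℤ} (h : IsAdj p p') :
    IsAdj (quadrantMap N q p) (quadrantMap N q p') := by
  unfold IsAdj at *
  rcases quadrantMap_abs_sub q p p' with ⟨h1, h2⟩ | ⟨h1, h2⟩ <;> rw [h1, h2] <;> linarith

theorem InSquare.quadrantMap {p : ℤ × ℤ} (h : InSquare N p) :
    InSquare (2 * N) (quadrantMap N q p) := by
  unfold InSquare at *
  match q with
  | 0 | 1 | 2 | _ + 3 => simp only [HilbertCurve.quadrantMap]; omega

theorem quadrantMap_inj {q' : ℕ} {p p' : ℤ × ℤ} (hp : InSquare N p) (hp' : InSquare N p')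
    (hq : q < 4) (hq' : q' < 4) (h : quadrantMap N q p = quadrantMap N q' p') :
    q = q' ∧ p = p' := by
  obtain ⟨x, y⟩ := p
  obtain ⟨x', y'⟩ := p'
  unfold InSquare at hp hp'
  interval_cases q <;> interval_cases q' <;>
    simp only [quadrantMap, Prod.ext_iff, true_and] at h ⊢ <;> omega

theorem parent_quadrantMap (q : ℕ) (p : ℤ × ℤ) :
    parent (quadrantMap (2 * N) q p) = quadrantMap N q (parent p) := by
  match q with
  | 0 | 1 | 2 | _ + 3 => simp only [quadrantMap, parent, Prod.ext_iff, true_and] <;> omega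

theorem quadrantMap_reflect (hq : q < 4) (p : ℤ × ℤ) :
    quadrantMap N (3 - q) (reflect N p) = reflect (2 * N) (quadrantMap N q p) := by
  interval_cases q <;>
    simp only [quadrantMap, reflect, Prod.ext_iff, Nat.reduceSub, true_and, and_true] <;> omega

theorem isAdj_quadrantExit_quadrantEntry (hq : q < 3) :
    IsAdj (quadrantExit N q) (quadrantEntry N (q + 1)) := by
  rw [isAdj_iff]
  interval_cases q <;>
    simp only [quadrantExit, quadrantEntry, quadrantMap, Nat.reduceAdd, true_and] <;> omega

theorem sqDist_quadrantExit_quadrantEntry_add_two (hq : q < 2) :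
    sqDist (quadrantExit N q) (quadrantEntry N (q + 2)) = N ^ 2 + 1 := by
  interval_cases q <;>
    simp only [quadrantExit, quadrantEntry, quadrantMap, sqDist, Nat.reduceAdd] <;> ring

end quadrantMap

theorem cornerCost_reflect_zero (N : ℤ) (p : ℤ × ℤ) :
    cornerCost (reflect N p) (0, 0) = cornerCost p (N - 1, 0) := by
  simp only [cornerCost, sqDist, supDist, reflect, sub_zero]
  rw [abs_sub_comm (N - 1)]
  ring

theorem cornerCost_zero_eq_max {p : ℤ × ℤ} (hx : 0 ≤ p.1) (hy : 0 ≤ p.2) :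
    cornerCost p (0, 0) = max ((p.1 + 1) ^ 2 + p.2 ^ 2) (p.1 ^ 2 + (p.2 + 1) ^ 2) - 1 := by
  simp only [cornerCost, sqDist, supDist, sub_zero, abs_of_nonneg hx, abs_of_nonneg hy]
  rw [mul_max_of_nonneg _ _ zero_le_two, ← max_add_add_left, ← max_sub_sub_right]
  congr 1 <;> ring

theorem cornerCost_quadrantMap_zero_le {N r : ℤ} {q : ℕ} {p : ℤ × ℤ} (hp : InSquare N p)
    (hq : q < 4) (h : cornerCost p (0, 0) ≤ 3 * r) :
    cornerCost (quadrantMap N q p) (0, 0) ≤ 3 * (q * N ^ 2 + r) := by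
  have hp' := hp.quadrantMap (q := q)
  rw [cornerCost_zero_eq_max hp.1 hp.2.2.1, sub_le_iff_le_add, max_le_iff] at h
  rw [cornerCost_zero_eq_max hp'.1 hp'.2.2.1, sub_le_iff_le_add, max_le_iff]
  obtain ⟨x, y⟩ := p
  obtain ⟨hx, hxN, hy, hyN⟩ := hp
  have hN : 0 ≤ N := hx.trans hxN.le
  have := mul_nonneg hN (sub_nonneg.2 hxN)
  have := mul_nonneg hN (sub_nonneg.2 hyN)
  have := mul_nonneg hx hN
  have := mul_nonneg hy hN
  interval_cases q <;> simp only [quadrantMap] at h ⊢ <;> push_cast <;> constructor <;> linarith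

theorem exists_eq_mul_add_of_lt {n j : ℕ} (hj : j < 4 ^ (n + 1)) :
    ∃ q < 4, ∃ r < 4 ^ n, j = q * 4 ^ n + r :=
  ⟨j / 4 ^ n, Nat.div_lt_of_lt_mul (by rwa [pow_succ] at hj), j % 4 ^ n,
    Nat.mod_lt _ (by positivity), (Nat.div_add_mod' j _).symm⟩

theorem hilbert_succ (n q : ℕ) {r : ℕ} (hr : r < 4 ^ n) :
    hilbert (n + 1) (q * 4 ^ n + r) = quadrantMap (2 ^ n) q (hilbert n r) := by
  rw [hilbert, Nat.mul_add_mod_of_lt hr, mul_comm, Nat.mul_add_div (by positivity),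
    Nat.div_eq_of_lt hr, add_zero]

theorem hilbert_inSquare (n j : ℕ) : InSquare (2 ^ n) (hilbert n j) := by
  induction n generalizing j with
  | zero => simp [InSquare, hilbert]
  | succ n ih => rw [hilbert, pow_succ']; exact (ih _).quadrantMap

theorem hilbert_apply_zero (n : ℕ) : hilbert n 0 = (0, 0) := by
  induction n with
  | zero => rfl
  | succ n ih => simp [hilbert, ih, quadrantMap]

theorem hilbert_reverse (n : ℕ) {j : ℕ} (hj : j < 4 ^ n) :
    hilbert n (4 ^ n - 1 - j) = reflect (2 ^ n) (hilbert n j) := by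
  induction n generalizing j with
  | zero => simp [hilbert, reflect]
  | succ n ih =>
    obtain ⟨q, hq, r, hr, rfl⟩ := exists_eq_mul_add_of_lt hj
    have hrev : 4 ^ (n + 1) - 1 - (q * 4 ^ n + r) = (3 - q) * 4 ^ n + (4 ^ n - 1 - r) := by
      rw [pow_succ]; interval_cases q <;> omega
    rw [hrev, hilbert_succ n _ (by omega), ih hr, quadrantMap_reflect hq, hilbert_succ n q hr,
      pow_succ']

theorem hilbert_last (n : ℕ) : hilbert n (4 ^ n - 1) = (2 ^ n - 1, 0) := by
  simpa [hilbert_apply_zero, reflect] using hilbert_reverse n (j := 0) (by positivity)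

theorem hilbert_parent (n : ℕ) {j : ℕ} (hj : j < 4 ^ (n + 1)) :
    parent (hilbert (n + 1) j) = hilbert n (j / 4) := by
  induction n generalizing j with
  | zero =>
    have h := hilbert_inSquare 1 j
    simp only [InSquare, pow_one] at h
    simp only [parent, Prod.ext_iff, zero_add, show hilbert 0 (j / 4) = (0, 0) from rfl]
    omega
  | succ n ih =>
    obtain ⟨q, -, r, hr, rfl⟩ := exists_eq_mul_add_of_lt hj
    have hdiv : (q * 4 ^ (n + 1) + r) / 4 = q * 4 ^ n + r / 4 := by
      rw [pow_succ, ← mul_assoc, mul_comm _ 4, Nat.mul_add_div (by norm_num)]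
    have hr4 : r / 4 < 4 ^ n := by rw [pow_succ] at hr; omega
    rw [hilbert_succ _ q hr, hdiv, hilbert_succ n q hr4, ← ih hr, pow_succ',
      parent_quadrantMap]

theorem hilbert_isAdj (n : ℕ) {j : ℕ} (hj : j + 1 < 4 ^ n) :
    IsAdj (hilbert n j) (hilbert n (j + 1)) := by
  induction n generalizing j with
  | zero => simp at hj
  | succ n ih =>
    obtain ⟨q, hq, r, hr, rfl⟩ := exists_eq_mul_add_of_lt (Nat.lt_of_succ_lt hj)
    by_cases hr1 : r + 1 < 4 ^ n
    · rw [add_assoc, hilbert_succ n q hr, hilbert_succ n q hr1]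
      exact (ih hr1).quadrantMap
    · have hlast : r = 4 ^ n - 1 := by omega
      have hnext : q * 4 ^ n + r + 1 = (q + 1) * 4 ^ n + 0 := by
        rw [pow_succ] at hj; subst hlast; rw [add_mul]; omega
      have hq3 : q < 3 := by
        by_contra! h
        rw [pow_succ] at hj; nlinarith
      rw [hilbert_succ n q hr, hnext, hilbert_succ n _ (r := 0) (by positivity), hlast,
        hilbert_last, hilbert_apply_zero]
      exact isAdj_quadrantExit_quadrantEntry hq3

theorem hilbert_injOn (n : ℕ) : Set.InjOn (hilbert n) (Set.Iio (4 ^ n)) := by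
  induction n with
  | zero =>
    intro i hi j hj _
    simp_all
  | succ n ih =>
    intro i hi j hj h
    obtain ⟨q, hq, r, hr, rfl⟩ := exists_eq_mul_add_of_lt hi
    obtain ⟨q', hq', r', hr', rfl⟩ := exists_eq_mul_add_of_lt hj
    rw [hilbert_succ n q hr, hilbert_succ n q' hr'] at h
    obtain ⟨rfl, hrr'⟩ := quadrantMap_inj (hilbert_inSquare n r) (hilbert_inSquare n r') hq hq' h
    rw [ih hr hr' hrr']

theorem hilbert_cornerCost_zero_le (n : ℕ) {j : ℕ} (hj : j < 4 ^ n) :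
    cornerCost (hilbert n j) (0, 0) ≤ 3 * j := by
  induction n generalizing j with
  | zero => simp_all [hilbert, cornerCost, sqDist, supDist]
  | succ n ih =>
    obtain ⟨q, hq, r, hr, rfl⟩ := exists_eq_mul_add_of_lt hj
    rw [hilbert_succ n q hr]
    have h := cornerCost_quadrantMap_zero_le (hilbert_inSquare n r) hq (ih hr)
    push_cast at h ⊢
    rwa [← pow_mul, mul_comm n, pow_mul] at h

theorem hilbert_cornerCost_last_le (n : ℕ) {j : ℕ} (hj : j < 4 ^ n) :
    cornerCost (hilbert n j) (2 ^ n - 1, 0) ≤ 3 * (4 ^ n - 1 - j) := by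
  have h := hilbert_cornerCost_zero_le n (j := 4 ^ n - 1 - j) (by omega)
  rw [hilbert_reverse n hj, cornerCost_reflect_zero] at h
  push_cast [Nat.sub_sub, Nat.cast_sub (show 1 + j ≤ 4 ^ n by omega)] at h
  linarith

theorem hilbert_cornerCost_quadrantEntry_le (n q : ℕ) {r : ℕ} (hr : r < 4 ^ n) :
    cornerCost (hilbert (n + 1) (q * 4 ^ n + r)) (quadrantEntry (2 ^ n) q) ≤ 3 * r := by
  rw [hilbert_succ n q hr, quadrantEntry, cornerCost_quadrantMap]
  exact hilbert_cornerCost_zero_le n hr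

theorem hilbert_cornerCost_quadrantExit_le (n q : ℕ) {r : ℕ} (hr : r < 4 ^ n) :
    cornerCost (hilbert (n + 1) (q * 4 ^ n + r)) (quadrantExit (2 ^ n) q) ≤
      3 * (4 ^ n - 1 - r) := by
  rw [hilbert_succ n q hr, quadrantExit, cornerCost_quadrantMap]
  exact hilbert_cornerCost_last_le n hr

theorem sqDist_le_of_isAdj {p p' e s : ℤ × ℤ} {a b : ℤ} (hes : IsAdj e s)
    (hp : cornerCost p e ≤ 3 * a) (hp' : cornerCost p' s ≤ 3 * b) :
    sqDist p' p ≤ 6 * (a + b + 1) := by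
  obtain ⟨x, y⟩ := p
  obtain ⟨x', y'⟩ := p'
  obtain ⟨ex, ey⟩ := e
  obtain ⟨sx, sy⟩ := s
  simp only [cornerCost, sqDist, supDist] at *
  -- Write `p' - p = (p' - s) + (s - e) + (e - p)`: the cross terms with the unit step `s - e`
  -- are bounded by the sup distances, the others by `(u + v)² ≤ 2u² + 2v²`.
  obtain ⟨_, _⟩ := abs_le.1 (le_max_left |x - ex| |y - ey|)
  obtain ⟨_, _⟩ := abs_le.1 (le_max_right |x - ex| |y - ey|)
  obtain ⟨_, _⟩ := abs_le.1 (le_max_left |x' - sx| |y' - sy|)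
  obtain ⟨_, _⟩ := abs_le.1 (le_max_right |x' - sx| |y' - sy|)
  have := sq_nonneg (x - ex + x' - sx)
  have := sq_nonneg (y - ey + y' - sy)
  rcases isAdj_iff.1 hes with ⟨h1, h2 | h2⟩ | ⟨h1, h2 | h2⟩ <;> dsimp only at h1 h2 <;>
    subst h1 h2 <;> linarith

theorem sqDist_le_three_mul (p a b q : ℤ × ℤ) :
    sqDist p q ≤ 3 * (sqDist p a + sqDist a b + sqDist b q) := by
  unfold sqDist
  nlinarith [sq_nonneg (p.1 - a.1 - (a.1 - b.1)), sq_nonneg (p.1 - a.1 - (b.1 - q.1)),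
    sq_nonneg (a.1 - b.1 - (b.1 - q.1)), sq_nonneg (p.2 - a.2 - (a.2 - b.2)),
    sq_nonneg (p.2 - a.2 - (b.2 - q.2)), sq_nonneg (a.2 - b.2 - (b.2 - q.2))]

theorem sqDist_le_of_inSquare {M : ℤ} {p q : ℤ × ℤ} (hp : InSquare M p) (hq : InSquare M q) :
    sqDist p q ≤ 2 * (M - 1) ^ 2 := by
  obtain ⟨hx, hxM, hy, hyM⟩ := hp
  obtain ⟨hx', hxM', hy', hyM'⟩ := hq
  have h1 : (p.1 - q.1) ^ 2 ≤ (M - 1) ^ 2 := sq_le_sq' (by linarith) (by linarith)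
  have h2 : (p.2 - q.2) ^ 2 ≤ (M - 1) ^ 2 := sq_le_sq' (by linarith) (by linarith)
  unfold sqDist
  linarith

theorem hilbert_sqDist_le_of_adjacent (n : ℕ) {q r r' : ℕ} (hq : q < 3) (hr : r < 4 ^ n)
    (hr' : r' < 4 ^ n) :
    sqDist (hilbert (n + 1) ((q + 1) * 4 ^ n + r')) (hilbert (n + 1) (q * 4 ^ n + r)) ≤
      6 * (4 ^ n + r' - r : ℤ) := by
  have := sqDist_le_of_isAdj (isAdj_quadrantExit_quadrantEntry hq)
    (hilbert_cornerCost_quadrantExit_le n q hr) (hilbert_cornerCost_quadrantEntry_le n (q + 1) hr')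
  linarith

theorem hilbert_sqDist_le_of_two_apart (n : ℕ) {q r r' : ℕ} (hq : q < 2) (hr : r < 4 ^ n)
    (hr' : r' < 4 ^ n) (hrr' : r' ≤ r) :
    sqDist (hilbert (n + 1) ((q + 2) * 4 ^ n + r')) (hilbert (n + 1) (q * 4 ^ n + r)) ≤
      6 * (2 * 4 ^ n + r' - r : ℤ) := by
  have h := sqDist_le_three_mul (hilbert (n + 1) ((q + 2) * 4 ^ n + r'))
    (quadrantEntry (2 ^ n) (q + 2)) (quadrantExit (2 ^ n) q) (hilbert (n + 1) (q * 4 ^ n + r))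
  have hN : ((2 : ℤ) ^ n) ^ 2 = 4 ^ n := by rw [← pow_mul, mul_comm, pow_mul]; norm_num
  rw [sqDist_comm (quadrantEntry _ _), sqDist_quadrantExit_quadrantEntry_add_two hq,
    sqDist_comm (quadrantExit _ _), hN] at h
  have := (sqDist_le_cornerCost _ _).trans (hilbert_cornerCost_quadrantEntry_le n (q + 2) hr')
  have := (sqDist_le_cornerCost _ _).trans (hilbert_cornerCost_quadrantExit_le n q hr)
  have : (r' : ℤ) ≤ r := by exact_mod_cast hrr'
  linarith

theorem hilbert_sqDist_le_of_gap (n : ℕ) {i j : ℕ} (hgap : 2 * 4 ^ n + 1 + i ≤ j) :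
    sqDist (hilbert (n + 1) j) (hilbert (n + 1) i) ≤ 6 * ((j : ℤ) - i) := by
  have h := sqDist_le_of_inSquare (hilbert_inSquare (n + 1) j) (hilbert_inSquare (n + 1) i)
  have hgap' : 2 * (4 : ℤ) ^ n + 1 ≤ j - i := by
    have : (2 * 4 ^ n + 1 + i : ℕ) ≤ (j : ℤ) := by exact_mod_cast hgap
    push_cast at this
    linarith
  have hN : ((2 : ℤ) ^ (n + 1)) ^ 2 = 4 * 4 ^ n := by
    rw [← pow_mul, mul_comm, pow_mul, pow_succ]; norm_num; ring
  nlinarith [pow_pos (two_pos (α := ℤ)) (n + 1)]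

theorem hilbert_sqDist_le (n : ℕ) {i j : ℕ} (hij : i < j) (hj : j < 4 ^ n) :
    sqDist (hilbert n j) (hilbert n i) ≤ 6 * ((j : ℤ) - i) := by
  induction n generalizing i j with
  | zero => simp at hj; omega
  | succ n ih =>
    obtain ⟨q, hq, r, hr, rfl⟩ := exists_eq_mul_add_of_lt (hij.trans hj)
    obtain ⟨q', hq', r', hr', rfl⟩ := exists_eq_mul_add_of_lt hj
    have hqq' : q ≤ q' := by
      by_contra! h
      nlinarith
    obtain rfl | rfl | ⟨rfl, hrr'⟩ | hfar :
        q' = q ∨ q' = q + 1 ∨ q' = q + 2 ∧ r' ≤ r ∨ q + 2 ≤ q' ∧ (q' = q + 2 → r < r') := by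
      omega
    · rw [hilbert_succ n _ hr, hilbert_succ n _ hr', sqDist_quadrantMap]
      have := ih (i := r) (by omega) hr'
      push_cast
      linarith
    · have := hilbert_sqDist_le_of_adjacent n (q := q) (by omega) hr hr'
      push_cast
      linarith
    · have := hilbert_sqDist_le_of_two_apart n (q := q) (by omega) hr hr' hrr'
      push_cast
      linarith
    · refine hilbert_sqDist_le_of_gap n ?_
      obtain ⟨hq2, hr2⟩ := hfar
      rcases hq2.eq_or_lt with rfl | hq3
      · have := hr2 rfl
        rw [add_mul]
        omega
      · have := Nat.mul_le_mul_right (4 ^ n) (show q + 3 ≤ q' by omega)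
        rw [add_mul] at this
        omega

theorem eq_of_isAdj_of_parent_ne {c d d' : ℤ × ℤ} (h : IsAdj c d) (h' : IsAdj c d')
    (hd : parent d = parent d') (hcd : parent c ≠ parent d) : d = d' := by
  rw [isAdj_iff] at h h'
  simp only [parent, Prod.ext_iff, ne_eq] at *
  omega

theorem coord_eq_of_isAdj_of_parent_ne {c c' d d' : ℤ × ℤ} (h : IsAdj c d) (h' : IsAdj c' d')
    (hc : parent c = parent c') (hd : parent d = parent d') (hcd : parent c ≠ parent d) :
    c.1 = c'.1 ∨ c.2 = c'.2 := by
  rw [isAdj_iff] at h h'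
  simp only [parent, Prod.ext_iff, ne_eq] at *
  omega

/-- The cell diagonally opposite to `p` in its 2 × 2 block. -/
def opposite (p : ℤ × ℤ) : ℤ × ℤ := (p.1 + 1 - 2 * (p.1 % 2), p.2 + 1 - 2 * (p.2 % 2))

theorem eq_opposite_of_isAdj_of_isAdj {a b c : ℤ × ℤ} (hab : IsAdj a b) (hbc : IsAdj b c)
    (hac : a ≠ c) (hb : parent b = parent a) (hc : parent c = parent a) :
    c = opposite a ∧ (b = (c.1, a.2) ∨ b = (a.1, c.2)) := by
  rw [isAdj_iff] at hab hbc
  simp only [opposite, parent, Prod.ext_iff, ne_eq] at *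
  omega

def IsBlockPath (X : ℤ × ℤ) (c : ℕ → ℤ × ℤ) : Prop :=
  (∀ k < 4, parent (c k) = X) ∧ (∀ k < 3, IsAdj (c k) (c (k + 1))) ∧ Set.InjOn c (Set.Iio 4)

namespace IsBlockPath

variable {X : ℤ × ℤ} {c d : ℕ → ℤ × ℤ}

theorem eq_opposite {k : ℕ} (hc : IsBlockPath X c) (hk : k < 2) :
    c (k + 2) = opposite (c k) ∧
      (c (k + 1) = ((c (k + 2)).1, (c k).2) ∨ c (k + 1) = ((c k).1, (c (k + 2)).2)) := by
  obtain ⟨hX, hadj, hinj⟩ := hc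
  exact eq_opposite_of_isAdj_of_isAdj (hadj k (by omega)) (hadj (k + 1) (by omega))
    (hinj.ne (by simp; omega) (by simp; omega) (by omega))
    ((hX _ (by omega)).trans (hX k (by omega)).symm)
    ((hX _ (by omega)).trans (hX k (by omega)).symm)

theorem eqOn (hc : IsBlockPath X c) (hd : IsBlockPath X d) (h0 : c 0 = d 0)
    (h3 : (c 3).1 = (d 3).1 ∨ (c 3).2 = (d 3).2) : Set.EqOn c d (Set.Iio 4) := by
  obtain ⟨hc2, hc1⟩ := hc.eq_opposite (k := 0) (by norm_num)
  obtain ⟨hc3, -⟩ := hc.eq_opposite (k := 1) (by norm_num)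
  obtain ⟨hd2, hd1⟩ := hd.eq_opposite (k := 0) (by norm_num)
  obtain ⟨hd3, -⟩ := hd.eq_opposite (k := 1) (by norm_num)
  intro k hk
  simp only [Set.mem_Iio] at hk
  simp only [opposite, Prod.ext_iff, Nat.reduceAdd, zero_add] at *
  interval_cases k <;> omega

end IsBlockPath

structure RefinesPath (P : ℕ → ℤ × ℤ) (m : ℕ) (f : ℕ → ℤ × ℤ) : Prop where
  parent_eq : ∀ k < 4 * m, parent (f k) = P (k / 4)
  isAdj : ∀ k, k + 1 < 4 * m → IsAdj (f k) (f (k + 1))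
  injOn : Set.InjOn f (Set.Iio (4 * m))

namespace RefinesPath

variable {P f g : ℕ → ℤ × ℤ} {m : ℕ}

theorem parent_block (hf : RefinesPath P m f) {a k : ℕ} (ha : a < m) (hk : k < 4) :
    parent (f (4 * a + k)) = P a := by
  rw [hf.parent_eq _ (by omega)]
  congr 1
  omega

theorem isBlockPath (hf : RefinesPath P m f) {a : ℕ} (ha : a < m) :
    IsBlockPath (P a) (fun k ↦ f (4 * a + k)) := by
  refine ⟨fun k hk ↦ hf.parent_block ha hk, fun k hk ↦ hf.isAdj _ (by omega),
    fun k hk l hl h ↦ ?_⟩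
  simp only [Set.mem_Iio] at hk hl
  have := hf.injOn (by simp; omega) (by simp; omega) h
  omega

theorem parent_block_start (hf : RefinesPath P m f) {a : ℕ} (ha : a < m) :
    parent (f (4 * a)) = P a := by
  simpa using hf.parent_block ha (k := 0) (by norm_num)

theorem isAdj_block_last (hf : RefinesPath P m f) {a : ℕ} (ha : a + 1 < m) :
    IsAdj (f (4 * a + 3)) (f (4 * (a + 1))) :=
  hf.isAdj (4 * a + 3) (by omega)

theorem eq_block_of_eq_block_start (hP : ∀ a, a + 1 < m → P a ≠ P (a + 1))
    (hf : RefinesPath P m f) (hg : RefinesPath P m g) (hlast : f (4 * m - 1) = g (4 * m - 1))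
    {a : ℕ} (ha : a < m) (hstart : f (4 * a) = g (4 * a)) {k : ℕ} (hk : k < 4) :
    f (4 * a + k) = g (4 * a + k) := by
  refine (hf.isBlockPath ha).eqOn (hg.isBlockPath ha) hstart ?_ hk
  by_cases hnext : a + 1 < m
  · have hf3 := hf.parent_block ha (k := 3) (by norm_num)
    refine coord_eq_of_isAdj_of_parent_ne (hf.isAdj_block_last hnext)
      (hg.isAdj_block_last hnext) ?_ ?_ ?_
    · rw [hf3, hg.parent_block ha (by norm_num)]
    · rw [hf.parent_block_start hnext, hg.parent_block_start hnext]
    · rw [hf3, hf.parent_block_start hnext]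
      exact hP a hnext
  · simp only [show 4 * a + 3 = 4 * m - 1 by omega, hlast, true_or]

theorem eq_block_start (hP : ∀ a, a + 1 < m → P a ≠ P (a + 1)) (hf : RefinesPath P m f)
    (hg : RefinesPath P m g) (h0 : f 0 = g 0) (hlast : f (4 * m - 1) = g (4 * m - 1))
    {a : ℕ} (ha : a < m) : f (4 * a) = g (4 * a) := by
  induction a with
  | zero => simpa using h0
  | succ a ih =>
    have h3 := eq_block_of_eq_block_start hP hf hg hlast (by omega) (ih (by omega))
      (k := 3) (by norm_num)
    refine eq_of_isAdj_of_parent_ne (h3 ▸ hf.isAdj_block_last ha) (hg.isAdj_block_last ha) ?_ ?_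
    · rw [hf.parent_block_start ha, hg.parent_block_start ha]
    · rw [hg.parent_block (by omega) (by norm_num), hf.parent_block_start ha]
      exact hP a ha

theorem eqOn (hP : ∀ a, a + 1 < m → P a ≠ P (a + 1)) (hf : RefinesPath P m f)
    (hg : RefinesPath P m g) (h0 : f 0 = g 0) (hlast : f (4 * m - 1) = g (4 * m - 1)) :
    Set.EqOn f g (Set.Iio (4 * m)) := by
  intro k hk
  simp only [Set.mem_Iio] at hk
  have := eq_block_of_eq_block_start hP hf hg hlast (a := k / 4) (by omega)
    (eq_block_start hP hf hg h0 hlast (by omega)) (k := k % 4) (by omega)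
  rwa [Nat.div_add_mod] at this

end RefinesPath

theorem hilbert_refinesPath (n : ℕ) : RefinesPath (hilbert n) (4 ^ n) (hilbert (n + 1)) where
  parent_eq _ hk := hilbert_parent n (by rwa [pow_succ'])
  isAdj _ hk := hilbert_isAdj (n + 1) (by rwa [pow_succ'])
  injOn := by rw [← pow_succ']; exact hilbert_injOn (n + 1)

def cellCoord {m : ℕ} (c : Fin m × Fin m) : ℤ × ℤ := ((c.1 : ℕ), (c.2 : ℕ))

theorem cellCoord_injective {m : ℕ} : Function.Injective (cellCoord (m := m)) := by
  rintro ⟨a, b⟩ ⟨c, d⟩ h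
  simp only [cellCoord, Prod.mk.injEq, Nat.cast_inj] at h
  rw [Fin.ext h.1, Fin.ext h.2]

def cellPath {n : ℕ} (φ : GridEnum n) (k : ℕ) : ℤ × ℤ :=
  if h : k < 4 ^ n then cellCoord (φ ⟨k, h⟩) else (0, 0)

section cellPath

variable {n : ℕ} {k : ℕ}

theorem cellPath_of_lt (φ : GridEnum n) (h : k < 4 ^ n) : cellPath φ k = cellCoord (φ ⟨k, h⟩) :=
  dif_pos h

theorem cellPath_order_zero (φ : GridEnum 0) (k : ℕ) : cellPath φ k = (0, 0) := by
  unfold cellPath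
  split_ifs with h
  · have h1 := (φ ⟨k, h⟩).1.isLt
    have h2 := (φ ⟨k, h⟩).2.isLt
    simp only [pow_zero, Nat.lt_one_iff] at h1 h2
    simp [cellCoord]
  · rfl

theorem nests_order_zero (φ₀ : GridEnum 0) (φ₁ : GridEnum 1) : Nests φ₀ φ₁ := by
  intro j
  have := (φ₁ j).1.isLt
  have := (φ₁ j).2.isLt
  have := (φ₀ ⟨j / 4, by omega⟩).1.isLt
  have := (φ₀ ⟨j / 4, by omega⟩).2.isLt
  simp only [pow_one, pow_zero] at *
  omega

theorem Nests.parent_cellPath {φ : GridEnum n} {ψ : GridEnum (n + 1)} (h : Nests φ ψ)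
    (hk : k < 4 ^ (n + 1)) : parent (cellPath ψ k) = cellPath φ (k / 4) := by
  have hk' : k / 4 < 4 ^ n := by rw [pow_succ] at hk; omega
  obtain ⟨h1, h2⟩ := h ⟨k, hk⟩
  dsimp only at h1 h2
  rw [cellPath_of_lt ψ hk, cellPath_of_lt φ hk']
  simp only [parent, cellCoord, Prod.ext_iff]
  omega

theorem refinesPath_cellPath {P : ℕ → ℤ × ℤ} {ψ : GridEnum (n + 1)} (hadj : ConsecEdgeAdj ψ)
    (hpar : ∀ k < 4 ^ (n + 1), parent (cellPath ψ k) = P (k / 4)) :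
    RefinesPath P (4 ^ n) (cellPath ψ) where
  parent_eq k hk := hpar k (by rwa [pow_succ'])
  isAdj k hk := by
    rw [← pow_succ'] at hk
    rw [cellPath_of_lt ψ (Nat.lt_of_succ_lt hk), cellPath_of_lt ψ hk]
    exact hadj k hk
  injOn k hk l hl h := by
    simp only [Set.mem_Iio, ← pow_succ'] at hk hl
    rw [cellPath_of_lt ψ hk, cellPath_of_lt ψ hl] at h
    simpa using ψ.injective (cellCoord_injective h)

theorem EndpointCond.cellPath_zero {φ : GridEnum n} (h : EndpointCond φ) :
    cellPath φ 0 = (0, 0) := by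
  rw [cellPath_of_lt φ (by positivity), h.1]
  rfl

theorem EndpointCond.cellPath_last {φ : GridEnum n} (h : EndpointCond φ) :
    cellPath φ (4 ^ n - 1) = (2 ^ n - 1, 0) := by
  rw [cellPath_of_lt φ (Nat.sub_lt (by positivity) one_pos), h.2]
  simp [cellCoord, Nat.cast_sub Nat.one_le_two_pow]

end cellPath

theorem cellPath_eqOn_hilbert (φ : ∀ n : ℕ, GridEnum n)
    (hadj : ∀ n : ℕ, 1 ≤ n → ConsecEdgeAdj (φ n))
    (hend : ∀ n : ℕ, 1 ≤ n → EndpointCond (φ n))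
    (hnest : ∀ n : ℕ, 1 ≤ n → Nests (φ n) (φ (n + 1))) (n : ℕ) :
    Set.EqOn (cellPath (φ n)) (hilbert n) (Set.Iio (4 ^ n)) := by
  induction n with
  | zero => exact fun k _ ↦ cellPath_order_zero _ k
  | succ n ih =>
    have hnest' : Nests (φ n) (φ (n + 1)) := by
      rcases n with _ | n
      · exact nests_order_zero _ _
      · exact hnest _ (by omega)
    have hf : RefinesPath (hilbert n) (4 ^ n) (cellPath (φ (n + 1))) :=
      refinesPath_cellPath (hadj _ (by omega)) fun k hk ↦ by
        rw [Nests.parent_cellPath hnest' hk, ih]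
        simp only [Set.mem_Iio]
        rw [pow_succ] at hk
        omega
    have hend' := hend (n + 1) (by omega)
    rw [pow_succ']
    refine hf.eqOn (fun a ha ↦ (hilbert_isAdj n ha).ne) (hilbert_refinesPath n) ?_ ?_
    · rw [EndpointCond.cellPath_zero hend', hilbert_apply_zero]
    · rw [← pow_succ', EndpointCond.cellPath_last hend', hilbert_last]

end HilbertCurve

/-- For the family of order-`n` Hilbert curves (the grid enumerations satisfying the
adjacency, endpoint and nesting conditions), the squared Euclidean distance between
cells is at most `6` times the index difference: the dilation factor of every
finite-order Hilbert curve approximation is at most `6`. -/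
theorem hilbert_dilation_factor_le_six
    (φ : ∀ n : ℕ, GridEnum n)
    (hadj : ∀ n : ℕ, 1 ≤ n → ConsecEdgeAdj (φ n))
    (hend : ∀ n : ℕ, 1 ≤ n → EndpointCond (φ n))
    (hnest : ∀ n : ℕ, 1 ≤ n → Nests (φ n) (φ (n + 1))) :
    ∀ n : ℕ, ∀ i j : Fin (4 ^ n), i < j →
      ((((φ n j).1 : ℕ) : ℤ) - (((φ n i).1 : ℕ) : ℤ)) ^ 2 +
        ((((φ n j).2 : ℕ) : ℤ) - (((φ n i).2 : ℕ) : ℤ)) ^ 2 ≤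
        6 * (((j : ℕ) : ℤ) - ((i : ℕ) : ℤ)) := by
  intro n i j hij
  have hφ := HilbertCurve.cellPath_eqOn_hilbert φ hadj hend hnest n
  have key := HilbertCurve.hilbert_sqDist_le n hij j.isLt
  rw [← hφ i.isLt, ← hφ j.isLt, HilbertCurve.cellPath_of_lt _ i.isLt,
    HilbertCurve.cellPath_of_lt _ j.isLt] at key
  exact key
end
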